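/- arXiv:2202.03802 — 6 statements merged into one kernel-verified Lean document; each statement's English description precedes it below -/
import Mathlib

section
/- The potential ρ is upper semicontinuous on Δ. In particular, ρ is continuous at every point x ∈ Δ with ρ(x) = 0. -/
/-!
Fix `x₀ ∈ Δ` and `c > ρ x₀`. Choose a finite part `t` of the fibre over `φ x₀`, containing `x₀`,
off which the sum of `ρ` is `< c - ρ x₀`, and an Urysohn function `f : X → [0, 1]` with compact
support in `Δ`, equal to `1` near `x₀` and vanishing at the other points of `t`. Then
`S = L f` is continuous, `S (φ x₀) < c`, and `ρ x ≤ S (φ x)` for `x` near `x₀`, so `ρ x < c` near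
`x₀`. At a zero of `ρ ≥ 0` lower semicontinuity is automatic.
-/

open scoped ZeroAtInfty

noncomputable section

variable {X : Type*} [TopologicalSpace X]

/-- The fibre of `φ : Δ → X` over `y`. -/
def Fiber (Δ : Set X) (φ : X → X) (y : X) : Set X := {x | x ∈ Δ ∧ φ x = y}

/-- `ρ : Δ → [0,∞)` is a potential with bound `M`: it is nonnegative on `Δ`, the sums
`Σ_{x ∈ φ⁻¹(y)} ρ(x)` are (summable and) bounded by `M`, and for every `a ∈ C₀(Δ)` the
function `L(a)(y) = Σ_{x ∈ φ⁻¹(y)} ρ(x) a(x)` belongs to `C₀(X)`. -/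
def IsPotential (Δ : Set X) (φ : X → X) (ρ : X → ℝ) (M : ℝ) : Prop :=
  (∀ x ∈ Δ, 0 ≤ ρ x) ∧
  (∀ y : X, Summable fun x : Fiber Δ φ y => ρ x.1) ∧
  (∀ y : X, (∑' x : Fiber Δ φ y, ρ x.1) ≤ M) ∧
  ∀ a : C₀(X, ℂ), (∀ x ∉ Δ, a x = 0) →
    ∃ b : C₀(X, ℂ), ∀ y : X, b y = ∑' x : Fiber Δ φ y, (ρ x.1 : ℂ) * a x.1

/-- `Δ_pos`: the set of points of `Δ` where `ρ` is strictly positive. -/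
def Dpos (Δ : Set X) (ρ : X → ℝ) : Set X := {x | x ∈ Δ ∧ 0 < ρ x}

/-- `Δ_reg`: the set of points of `Δ_pos` where `ρ` (as a function on `Δ`) is continuous. -/
def Dreg (Δ : Set X) (ρ : X → ℝ) : Set X :=
  {x | x ∈ Δ ∧ 0 < ρ x ∧ ContinuousWithinAt ρ Δ x}

open Set Filter Topology

section Summation

variable {ι : Type*} {g w : ι → ℝ}

theorem Summable.mul_of_nonneg_of_le_one (hg : Summable g) (hg0 : 0 ≤ g) (hw0 : 0 ≤ w)
    (hw1 : w ≤ 1) : Summable (g * w) :=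
  hg.of_nonneg_of_le (fun j => mul_nonneg (hg0 j) (hw0 j))
    (fun j => mul_le_of_le_one_right (hg0 j) (hw1 j))

theorem tsum_mul_le_add_tsum_compl (hg : Summable g) (hg0 : 0 ≤ g) (hw0 : 0 ≤ w)
    (hw1 : w ≤ 1) {t : Finset ι} {i : ι} (hi : i ∈ t) (hwt : ∀ j ∈ t, j ≠ i → w j = 0) :
    ∑' j, g j * w j ≤ g i + ∑' j : {j // j ∉ t}, g j := by
  have hgw := hg.mul_of_nonneg_of_le_one hg0 hw0 hw1
  have hsum_t : ∑ j ∈ t, g j * w j = g i * w i :=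
    Finset.sum_eq_single_of_mem i hi fun j hj hji => by rw [hwt j hj hji, mul_zero]
  calc ∑' j, g j * w j = ∑ j ∈ t, g j * w j + ∑' j : {j // j ∉ t}, g j * w j :=
        hgw.sum_add_tsum_compl.symm
    _ ≤ g i + ∑' j : {j // j ∉ t}, g j := by
        rw [hsum_t]
        exact add_le_add (mul_le_of_le_one_right (hg0 i) (hw1 i))
          (Summable.tsum_le_tsum (fun j => mul_le_of_le_one_right (hg0 j) (hw1 j))
            (hgw.subtype _) (hg.subtype _))

end Summation

theorem exists_continuous_eventually_one_zero_of_isOpen [T2Space X] [LocallyCompactSpace X]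
    {U : Set X} {x : X} (hU : IsOpen U) (hx : x ∈ U) :
    ∃ f : C(X, ℝ), (∀ᶠ y in 𝓝 x, f y = 1) ∧ EqOn f 0 Uᶜ ∧ HasCompactSupport f ∧
      ∀ y, f y ∈ Icc (0 : ℝ) 1 := by
  obtain ⟨K, hK, hxK, hKU⟩ := exists_compact_subset hU hx
  obtain ⟨f, hf1, hf0, hfc, hf01⟩ := exists_continuous_one_zero_of_isCompact hK
    hU.isClosed_compl (disjoint_compl_right_iff_subset.2 hKU)
  exact ⟨f, eventually_of_mem (mem_interior_iff_mem_nhds.1 hxK) hf1, hf0, hfc, hf01⟩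

theorem UpperSemicontinuousWithinAt.continuousWithinAt_of_forall_le {α γ : Type*}
    [TopologicalSpace α] [LinearOrder γ] [TopologicalSpace γ] [OrderTopology γ]
    {f : α → γ} {s : Set α} {x : α} (hf : UpperSemicontinuousWithinAt f s x)
    (hmin : ∀ y ∈ s, f x ≤ f y) : ContinuousWithinAt f s x :=
  continuousWithinAt_iff_lower_upperSemicontinuousWithinAt.2
    ⟨fun _ hc => eventually_mem_nhdsWithin.mono fun y hy => hc.trans_le (hmin y hy), hf⟩

namespace IsPotential

variable {Δ : Set X} {φ : X → X} {ρ : X → ℝ} {M : ℝ}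

theorem continuous_tsum_fiber_mul (hpot : IsPotential Δ φ ρ M) {f : C(X, ℝ)}
    (hfc : HasCompactSupport f) (hfΔ : EqOn f 0 Δᶜ) :
    Continuous fun y => ∑' z : Fiber Δ φ y, ρ z * f z := by
  let a : C₀(X, ℂ) :=
    { toFun := fun x => (f x : ℂ)
      continuous_toFun := by fun_prop
      zero_at_infty' := (hfc.comp_left Complex.ofReal_zero).is_zero_at_infty }
  obtain ⟨b, hb⟩ := hpot.2.2.2 a fun x hx => by simp [a, hfΔ hx]
  have hre : (fun y => ∑' z : Fiber Δ φ y, ρ z * f z) = fun y => (b y).re := by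
    funext y
    rw [hb y, ← Complex.ofReal_re (∑' z : Fiber Δ φ y, ρ z * f z), Complex.ofReal_tsum]
    push_cast
    rfl
  rw [hre]
  exact Complex.continuous_re.comp (map_continuous b)

theorem upperSemicontinuousWithinAt [T2Space X] [LocallyCompactSpace X]
    (hpot : IsPotential Δ φ ρ M) (hΔ : IsOpen Δ) {x₀ : X} (hx₀ : x₀ ∈ Δ)
    (hφ : ContinuousWithinAt φ Δ x₀) : UpperSemicontinuousWithinAt ρ Δ x₀ := by
  have hρ0 := hpot.1
  have hsum := hpot.2.1
  intro c hc
  let i : Fiber Δ φ (φ x₀) := ⟨x₀, hx₀, rfl⟩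
  obtain ⟨t, htail, hit⟩ := (((tendsto_order.1 (tendsto_tsum_compl_atTop_zero
    fun z : Fiber Δ φ (φ x₀) => ρ z)).2 _ (sub_pos.2 hc)).and
    (eventually_ge_atTop {i})).exists
  let U : Set X := Δ \ (Subtype.val '' (t : Set (Fiber Δ φ (φ x₀))) \ {x₀})
  obtain ⟨f, hf1, hf0, hfc, hf01⟩ := exists_continuous_eventually_one_zero_of_isOpen
    (hΔ.sdiff ((t.finite_toSet.image _).sdiff).isClosed) (show x₀ ∈ U by simp [U, hx₀])
  let S : X → ℝ := fun y => ∑' z : Fiber Δ φ y, ρ z * f z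
  have hS : Continuous S :=
    hpot.continuous_tsum_fiber_mul hfc fun x hx => hf0 fun hxU => hx hxU.1
  have hSx₀ : S (φ x₀) < c := by
    have hvanish : ∀ j ∈ t, j ≠ i → f j = 0 := fun j hj hji =>
      hf0 fun hjU => hjU.2 ⟨⟨j, hj, rfl⟩, fun h => hji (Subtype.ext h)⟩
    calc S (φ x₀) ≤ ρ x₀ + ∑' z : {z // z ∉ t}, ρ z := tsum_mul_le_add_tsum_compl
          (g := fun z : Fiber Δ φ (φ x₀) => ρ z) (w := fun z => f z) (hsum _)
          (fun z => hρ0 z z.2.1) (fun z => (hf01 z).1) (fun z => (hf01 z).2)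
          (hit (Finset.mem_singleton_self i)) hvanish
      _ < c := by linarith
  have hρS : ∀ x ∈ Δ, f x = 1 → ρ x ≤ S (φ x) := fun x hx hfx => by
    have := ((hsum (φ x)).mul_of_nonneg_of_le_one (fun z => hρ0 z z.2.1) (fun z => (hf01 z).1)
      (fun z => (hf01 z).2)).le_tsum ⟨x, hx, rfl⟩
      fun z _ => mul_nonneg (hρ0 z z.2.1) (hf01 z).1
    simpa [hfx] using this
  filter_upwards [hS.continuousAt.comp_continuousWithinAt hφ (Iio_mem_nhds hSx₀),
    nhdsWithin_le_nhds hf1, self_mem_nhdsWithin] with x hxS hx1 hxΔ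
  exact (hρS x hxΔ hx1).trans_lt hxS

end IsPotential

theorem potential_upperSemicontinuous_general
    {X : Type*} [TopologicalSpace X] [LocallyCompactSpace X] [T2Space X]
    (Δ : Set X) (φ : X → X) (ρ : X → ℝ) (M : ℝ)
    (hΔ : IsOpen Δ) (hφ : ContinuousOn φ Δ)
    (hpot : IsPotential Δ φ ρ M) :
    (∀ x ∈ Δ, UpperSemicontinuousWithinAt ρ Δ x) ∧
    (∀ x ∈ Δ, ρ x = 0 → ContinuousWithinAt ρ Δ x) := by
  have husc : ∀ x ∈ Δ, UpperSemicontinuousWithinAt ρ Δ x := fun x hx =>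
    hpot.upperSemicontinuousWithinAt hΔ hx (hφ x hx)
  exact ⟨husc, fun x hx hρx =>
    (husc x hx).continuousWithinAt_of_forall_le fun y hy => hρx ▸ hpot.1 y hy⟩

/-- The potential `ρ` is upper semicontinuous on `Δ`; in particular it is
continuous (as a function on `Δ`) at every point of `Δ` where it vanishes. -/
theorem potential_upperSemicontinuous
    {X : Type*} [TopologicalSpace X] [LocallyCompactSpace X] [T2Space X]
    (Δ : Set X) (φ : X → X) (ρ : X → ℝ) (M : ℝ)
    (hΔ : IsOpen Δ) (hφ : ContinuousOn φ Δ)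
    (hcount : ∀ y : X, (Fiber Δ φ y).Countable)
    (hpot : IsPotential Δ φ ρ M) :
    (∀ x ∈ Δ, UpperSemicontinuousWithinAt ρ Δ x) ∧
    (∀ x ∈ Δ, ρ x = 0 → ContinuousWithinAt ρ Δ x) :=
  potential_upperSemicontinuous_general Δ φ ρ M hΔ hφ hpot
end
end

section
/- Let x₀ ∈ Δ with ρ(x₀) > 0. The following are equivalent: (1) ρ is continuous at x₀; (2) φ is locally injective at x₀, i.e. there is an open set U ⊆ Δ with x₀ ∈ U such that the restriction φ|_U is injective; (3) x₀ is a local homeomorphism point for φ, i.e. there is an open set U ⊆ Δ with x₀ ∈ U such that φ(U) is open in X and φ restricted to U is a homeomorphism onto φ(U). -/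
/-!
If `φ` is injective on an open `U ∋ x₀`, apply the transfer operator to a bump function `f`
supported in `U` and equal to `1` near `x₀`: each fibre meets `U` at most once, so
`L f (φ x) = ρ x` near `x₀` and `ρ` is continuous there. Conversely, if `ρ > ¾ ρ(x₀)` near `x₀`,
choose a bump `f` that vanishes on the finitely many other points of the fibre over `φ(x₀)`
carrying all but `ρ(x₀)/4` of its mass; then `L f (φ x₀) < 3/2 ρ(x₀)`, which by continuity of
`L f` persists near `φ(x₀)` and forbids two points of the fibre near `x₀`.
Openness of `φ` on `{ρ > 0}` holds because `φ '' V` contains `{L f > 0}` for bumps `f` supported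
in `V`.
-/

open scoped ZeroAtInfty

noncomputable section

variable {X : Type*} [TopologicalSpace X]

open Set Filter Topology

/-- The transfer operator `L` of a potential, on real-valued functions. -/
def transfer (Δ : Set X) (φ : X → X) (ρ : X → ℝ) (f : X → ℝ) (y : X) : ℝ :=
  ∑' x : Fiber Δ φ y, ρ x * f x

lemma tsum_mul_le_add_tsum_compl_s1 {ι : Type*} {u v : ι → ℝ} (hu : Summable u) (hu0 : 0 ≤ u)
    (hv0 : 0 ≤ v) (hv1 : v ≤ 1) {T : Finset ι} {i₀ : ι} (hvT : ∀ i ∈ T, i ≠ i₀ → v i = 0) :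
    ∑' i, u i * v i ≤ u i₀ + ∑' i : {i // i ∉ T}, u i := by
  classical
  have huv : Summable fun i => u i * v i :=
    hu.of_nonneg_of_le (fun i => mul_nonneg (hu0 i) (hv0 i))
      (fun i => mul_le_of_le_one_right (hu0 i) (hv1 i))
  rw [← huv.sum_add_tsum_compl (s := T)]
  refine add_le_add ?_ ?_
  · calc ∑ i ∈ T, u i * v i ≤ ∑ i ∈ insert i₀ T, u i * v i :=
          Finset.sum_le_sum_of_subset_of_nonneg (Finset.subset_insert _ _)
            fun i _ _ => mul_nonneg (hu0 i) (hv0 i)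
      _ = u i₀ * v i₀ := Finset.sum_eq_single_of_mem i₀ (Finset.mem_insert_self _ _)
          fun i hi hne => by rw [hvT i (Finset.mem_of_mem_insert_of_ne hi hne) hne, mul_zero]
      _ ≤ u i₀ := mul_le_of_le_one_right (hu0 i₀) (hv1 i₀)
  · exact (huv.subtype _).tsum_le_tsum (fun i => mul_le_of_le_one_right (hu0 i) (hv1 i))
      (hu.subtype _)

lemma exists_bump [LocallyCompactSpace X] [T2Space X] {V : Set X} (hV : IsOpen V) {x₀ : X}
    (hx₀ : x₀ ∈ V) :
    ∃ (f : C(X, ℝ)) (W : Set X), HasCompactSupport f ∧ (∀ x, f x ∈ Icc (0 : ℝ) 1) ∧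
      IsOpen W ∧ x₀ ∈ W ∧ W ⊆ V ∧ EqOn f 1 W ∧ ∀ x ∉ V, f x = 0 := by
  obtain ⟨K, hK, hxK, hKV⟩ := exists_compact_subset hV hx₀
  obtain ⟨f, hf1, hf0, hfc, hf01⟩ := exists_continuous_one_zero_of_isCompact hK
    hV.isClosed_compl (disjoint_compl_right_iff_subset.mpr hKV)
  exact ⟨f, interior K, hfc, hf01, isOpen_interior, hxK, interior_subset.trans hKV,
    hf1.mono interior_subset, fun x hx => hf0 hx⟩

omit [TopologicalSpace X] in
lemma transfer_eq_zero_of_notMem_image {Δ V : Set X} {φ : X → X} {ρ f : X → ℝ}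
    (hfV : ∀ x ∉ V, f x = 0) {y : X} (hy : y ∉ φ '' V) : transfer Δ φ ρ f y = 0 := by
  refine (tsum_congr fun x => ?_).trans tsum_zero
  rw [hfV x fun hx => hy ⟨x, hx, x.2.2⟩, mul_zero]

omit [TopologicalSpace X] in
lemma transfer_apply_of_injOn {Δ U : Set X} {φ : X → X} {ρ f : X → ℝ} (hU : InjOn φ U)
    (hfU : ∀ x ∉ U, f x = 0) {x : X} (hxU : x ∈ U) (hxΔ : x ∈ Δ) :
    transfer Δ φ ρ f (φ x) = ρ x * f x := by
  refine (tsum_eq_single (⟨x, hxΔ, rfl⟩ : Fiber Δ φ (φ x)) fun x' hne => ?_).trans rfl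
  have hx'U : (x' : X) ∉ U := fun hx'U => hne (Subtype.ext (hU hx'U hxU x'.2.2))
  rw [hfU _ hx'U, mul_zero]

namespace IsPotential

variable {Δ : Set X} {φ : X → X} {ρ : X → ℝ} {M : ℝ}

lemma summable_mul (hpot : IsPotential Δ φ ρ M) {f : X → ℝ} (hf : ∀ x, f x ∈ Icc (0 : ℝ) 1)
    (y : X) : Summable fun x : Fiber Δ φ y => ρ x * f x :=
  (hpot.2.1 y).of_nonneg_of_le (fun x => mul_nonneg (hpot.1 x x.2.1) (hf x).1)
    fun x => mul_le_of_le_one_right (hpot.1 x x.2.1) (hf x).2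

lemma sum_le_transfer (hpot : IsPotential Δ φ ρ M) {f : X → ℝ} (hf : ∀ x, f x ∈ Icc (0 : ℝ) 1)
    {y : X} (s : Finset (Fiber Δ φ y)) : ∑ x ∈ s, ρ x * f x ≤ transfer Δ φ ρ f y :=
  (hpot.summable_mul hf y).sum_le_tsum s fun x _ => mul_nonneg (hpot.1 x x.2.1) (hf x).1

lemma continuous_transfer (hpot : IsPotential Δ φ ρ M) {f : X → ℝ} (hf : Continuous f)
    (hf0 : Tendsto f (cocompact X) (𝓝 0)) (hfΔ : ∀ x ∉ Δ, f x = 0) :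
    Continuous (transfer Δ φ ρ f) := by
  let a : C₀(X, ℂ) := ⟨⟨fun x => (f x : ℂ), by fun_prop⟩,
    (Complex.continuous_ofReal.tendsto' 0 0 Complex.ofReal_zero).comp hf0⟩
  obtain ⟨b, hb⟩ := hpot.2.2.2 a fun x hx => by simp [a, hfΔ x hx]
  have hba : ∀ y, b y = (transfer Δ φ ρ f y : ℂ) := fun y => by
    simp [hb y, transfer, Complex.ofReal_tsum, a]
  have : transfer Δ φ ρ f = fun y => (b y).re := funext fun y => by simp [hba y]
  rw [this]
  fun_prop

lemma isOpen_image [LocallyCompactSpace X] [T2Space X] (hpot : IsPotential Δ φ ρ M)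
    {V : Set X} (hV : IsOpen V) (hVΔ : V ⊆ Δ) (hρV : ∀ x ∈ V, 0 < ρ x) : IsOpen (φ '' V) := by
  refine isOpen_iff_forall_mem_open.mpr ?_
  rintro _ ⟨x, hxV, rfl⟩
  obtain ⟨f, W, hfc, hf01, -, hxW, -, hfW, hfV⟩ := exists_bump hV hxV
  refine ⟨{y | 0 < transfer Δ φ ρ f y}, fun y hy => ?_, isOpen_lt continuous_const
    (hpot.continuous_transfer f.continuous hfc.is_zero_at_infty fun x hx => hfV x
      fun h => hx (hVΔ h)), ?_⟩
  · by_contra hyV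
    exact hy.ne' (transfer_eq_zero_of_notMem_image hfV hyV)
  · have := hpot.sum_le_transfer hf01 {(⟨x, hVΔ hxV, rfl⟩ : Fiber Δ φ (φ x))}
    rw [Finset.sum_singleton] at this
    have hfx : f x = 1 := hfW hxW
    simp only [hfx, mul_one] at this
    exact (hρV x hxV).trans_le this

lemma exists_eqOn_comp_of_injOn [LocallyCompactSpace X] [T2Space X]
    (hpot : IsPotential Δ φ ρ M) {U : Set X} (hU : IsOpen U) (hUΔ : U ⊆ Δ) (hinj : InjOn φ U)
    {x₀ : X} (hx₀ : x₀ ∈ U) :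
    ∃ (g : X → ℝ) (W : Set X), Continuous g ∧ IsOpen W ∧ x₀ ∈ W ∧ EqOn ρ (g ∘ φ) W := by
  obtain ⟨f, W, hfc, -, hW, hx₀W, hWU, hfW, hfU⟩ := exists_bump hU hx₀
  refine ⟨transfer Δ φ ρ f, W, hpot.continuous_transfer f.continuous hfc.is_zero_at_infty
    fun x hx => hfU x fun h => hx (hUΔ h), hW, hx₀W, fun x hxW => ?_⟩
  have hfx : f x = 1 := hfW hxW
  simp [transfer_apply_of_injOn hinj hfU (hWU hxW) (hUΔ (hWU hxW)), hfx]

lemma continuousWithinAt_of_injOn [LocallyCompactSpace X] [T2Space X]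
    (hpot : IsPotential Δ φ ρ M) (hφ : ContinuousOn φ Δ) {U : Set X} (hU : IsOpen U)
    (hUΔ : U ⊆ Δ) (hinj : InjOn φ U) {x₀ : X} (hx₀ : x₀ ∈ U) : ContinuousWithinAt ρ Δ x₀ := by
  obtain ⟨g, W, hg, hW, hx₀W, hρW⟩ := hpot.exists_eqOn_comp_of_injOn hU hUΔ hinj hx₀
  refine (hg.continuousAt.comp_continuousWithinAt (hφ x₀ (hUΔ hx₀))).congr_of_eventuallyEq
    ?_ (hρW hx₀W)
  filter_upwards [mem_nhdsWithin_of_mem_nhds (hW.mem_nhds hx₀W)] with x hx using hρW hx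

lemma exists_injOn_of_continuousWithinAt [LocallyCompactSpace X] [T2Space X]
    (hpot : IsPotential Δ φ ρ M) (hΔ : IsOpen Δ) (hφ : ContinuousOn φ Δ) {x₀ : X}
    (hx₀ : x₀ ∈ Δ) (hρx₀ : 0 < ρ x₀) (hρ : ContinuousWithinAt ρ Δ x₀) :
    ∃ U : Set X, IsOpen U ∧ x₀ ∈ U ∧ U ⊆ Δ ∧ InjOn φ U := by
  classical
  obtain ⟨t, ht, hx₀t, hρt⟩ :=
    mem_nhdsWithin.mp (hρ (Ioi_mem_nhds (by linarith : 3 / 4 * ρ x₀ < ρ x₀)))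
  obtain ⟨T, hT⟩ := ((tendsto_order.1 (tendsto_tsum_compl_atTop_zero
    fun x : Fiber Δ φ (φ x₀) => ρ x)).2 _ (by linarith : 0 < ρ x₀ / 4)).exists
  set E : Set X := Subtype.val '' (T : Set (Fiber Δ φ (φ x₀))) \ {x₀}
  have hE : E.Finite := (T.finite_toSet.image _).subset sdiff_subset
  obtain ⟨f, W, hfc, hf01, hW, hx₀W, -, hfW, hfV⟩ :=
    exists_bump ((ht.inter hΔ).sdiff hE.isClosed) ⟨⟨hx₀t, hx₀⟩, fun h => h.2 rfl⟩
  have hL := hpot.continuous_transfer f.continuous hfc.is_zero_at_infty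
    fun x hx => hfV x fun h => hx h.1.2
  have hLx₀ : transfer Δ φ ρ f (φ x₀) < 3 / 2 * ρ x₀ :=
    calc transfer Δ φ ρ f (φ x₀) ≤ ρ x₀ + ∑' x : {x // x ∉ T}, ρ x :=
          tsum_mul_le_add_tsum_compl_s1 (hpot.2.1 _) (fun x => hpot.1 x x.2.1)
            (fun x => (hf01 x).1) (fun x => (hf01 x).2) (i₀ := ⟨x₀, hx₀, rfl⟩)
            fun x hxT hne => hfV x fun h => h.2 ⟨⟨x, hxT, rfl⟩, fun h' => hne (Subtype.ext h')⟩
      _ < 3 / 2 * ρ x₀ := by linarith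
  refine ⟨W ∩ t ∩ (Δ ∩ φ ⁻¹' {y | transfer Δ φ ρ f y < 3 / 2 * ρ x₀}),
    (hW.inter ht).inter (hφ.isOpen_inter_preimage hΔ (isOpen_lt hL continuous_const)),
    ⟨⟨hx₀W, hx₀t⟩, hx₀, hLx₀⟩, fun x hx => hx.2.1, ?_⟩
  rintro x₁ ⟨⟨hx₁W, hx₁t⟩, hx₁, hLx₁⟩ x₂ ⟨⟨hx₂W, hx₂t⟩, hx₂, -⟩ hφx
  by_contra hne
  have hpair := hpot.sum_le_transfer hf01
    {(⟨x₁, hx₁, rfl⟩ : Fiber Δ φ (φ x₁)), ⟨x₂, hx₂, hφx.symm⟩}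
  rw [Finset.sum_pair fun h => hne (congrArg Subtype.val h)] at hpair
  have hf₁ : f x₁ = 1 := hfW hx₁W
  have hf₂ : f x₂ = 1 := hfW hx₂W
  simp only [hf₁, hf₂, mul_one] at hpair
  have hρ₁ : 3 / 4 * ρ x₀ < ρ x₁ := hρt ⟨hx₁t, hx₁⟩
  have hρ₂ : 3 / 4 * ρ x₀ < ρ x₂ := hρt ⟨hx₂t, hx₂⟩
  have hLx₁' : transfer Δ φ ρ f (φ x₁) < 3 / 2 * ρ x₀ := hLx₁
  linarith

end IsPotential

theorem continuity_iff_locallyInjective_iff_localHomeoPoint_general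
    {X : Type*} [TopologicalSpace X] [LocallyCompactSpace X] [T2Space X]
    (Δ : Set X) (φ : X → X) (ρ : X → ℝ) (M : ℝ)
    (hΔ : IsOpen Δ) (hφ : ContinuousOn φ Δ)
    (hpot : IsPotential Δ φ ρ M)
    (x₀ : X) (hx₀ : x₀ ∈ Δ) (hρx₀ : 0 < ρ x₀) :
    ((ContinuousWithinAt ρ Δ x₀) ↔
      ∃ U : Set X, IsOpen U ∧ x₀ ∈ U ∧ U ⊆ Δ ∧ Set.InjOn φ U) ∧
    ((∃ U : Set X, IsOpen U ∧ x₀ ∈ U ∧ U ⊆ Δ ∧ Set.InjOn φ U) ↔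
      ∃ U : Set X, IsOpen U ∧ x₀ ∈ U ∧ U ⊆ Δ ∧ Set.InjOn φ U ∧ IsOpen (φ '' U) ∧
        ∀ V ⊆ U, IsOpen V → IsOpen (φ '' V)) := by
  have hcont_iff : ContinuousWithinAt ρ Δ x₀ ↔
      ∃ U : Set X, IsOpen U ∧ x₀ ∈ U ∧ U ⊆ Δ ∧ InjOn φ U :=
    ⟨hpot.exists_injOn_of_continuousWithinAt hΔ hφ hx₀ hρx₀,
      fun ⟨_, hU, hx₀U, hUΔ, hinj⟩ => hpot.continuousWithinAt_of_injOn hφ hU hUΔ hinj hx₀U⟩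
  refine ⟨hcont_iff, fun hloc => ?_, fun ⟨U, hU, hx₀U, hUΔ, hinj, _⟩ => ⟨U, hU, hx₀U, hUΔ, hinj⟩⟩
  obtain ⟨t, ht, hx₀t, hρt⟩ := mem_nhdsWithin.mp (hcont_iff.2 hloc (Ioi_mem_nhds hρx₀))
  obtain ⟨U, hU, hx₀U, hUΔ, hinj⟩ := hloc
  have hUt : U ∩ t ⊆ Δ := inter_subset_left.trans hUΔ
  have hopen : ∀ V ⊆ U ∩ t, IsOpen V → IsOpen (φ '' V) := fun V hV hVo =>
    hpot.isOpen_image hVo (hV.trans hUt) fun x hx => hρt ⟨(hV hx).2, hUΔ (hV hx).1⟩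
  exact ⟨U ∩ t, hU.inter ht, ⟨hx₀U, hx₀t⟩, hUt, hinj.mono inter_subset_left,
    hopen _ subset_rfl (hU.inter ht), hopen⟩

/-- For `x₀ ∈ Δ` with `ρ(x₀) > 0`: continuity of `ρ` at `x₀` is equivalent to
local injectivity of `φ` at `x₀`, which is in turn equivalent to `x₀` being a local
homeomorphism point for `φ`. -/
theorem continuity_iff_locallyInjective_iff_localHomeoPoint
    {X : Type*} [TopologicalSpace X] [LocallyCompactSpace X] [T2Space X]
    (Δ : Set X) (φ : X → X) (ρ : X → ℝ) (M : ℝ)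
    (hΔ : IsOpen Δ) (hφ : ContinuousOn φ Δ)
    (hcount : ∀ y : X, (Fiber Δ φ y).Countable)
    (hpot : IsPotential Δ φ ρ M)
    (x₀ : X) (hx₀ : x₀ ∈ Δ) (hρx₀ : 0 < ρ x₀) :
    ((ContinuousWithinAt ρ Δ x₀) ↔
      ∃ U : Set X, IsOpen U ∧ x₀ ∈ U ∧ U ⊆ Δ ∧ Set.InjOn φ U) ∧
    ((∃ U : Set X, IsOpen U ∧ x₀ ∈ U ∧ U ⊆ Δ ∧ Set.InjOn φ U) ↔
      ∃ U : Set X, IsOpen U ∧ x₀ ∈ U ∧ U ⊆ Δ ∧ Set.InjOn φ U ∧ IsOpen (φ '' U) ∧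
        ∀ V ⊆ U, IsOpen V → IsOpen (φ '' V)) :=
  continuity_iff_locallyInjective_iff_localHomeoPoint_general Δ φ ρ M hΔ hφ hpot x₀ hx₀ hρx₀
end
end

section
/- Let (π, T) be a representation of L on a Hilbert space H. For all a ∈ C₀(X) and b ∈ C₀(Δ), the function b·(a∘φ) defined as x ↦ b(x)a(φ(x)) for x ∈ Δ and 0 for x ∉ Δ belongs to C₀(Δ), and π(b) T π(a) = π(b·(a∘φ)) T. If moreover φ is a proper map (preimages of compact sets are compact) and T(H) is contained in the closure of the linear span of {π(b)h : b ∈ C₀(Δ), h ∈ H}, then for every a ∈ C₀(X) the extension of a∘φ by zero belongs to C₀(Δ) and T π(a) = π(a∘φ) T. -/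
/-!
Put `c = b·(a∘φ)` and `S = π(b) T π(a) - π(c) T`. Since `T* π(d) T = π(L d)` for `d ∈ C₀(Δ)` and
`L` is a `C₀(X)`-module map, `L(d·(g∘φ)) = L(d)·g`, all four terms of `S* S` reduce to
`π(ā) π(L(b̄b)) π(a)`, so `S* S = 0` and `S = 0` by the C*-identity.
If `φ` is proper, `c = a∘φ` lies in `C₀(Δ)`, and the first part gives
`π(b)(T π(a) - π(c) T) = 0` for all `b ∈ C₀(Δ)`. The range of `T π(a) - π(c) T` is then
orthogonal to `π(C₀(Δ))H` while lying in the closure of its span, so it is zero.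
-/

open scoped ZeroAtInfty

noncomputable section

variable {X : Type*} [TopologicalSpace X]

/-- A representation `(π, T)` of the transfer operator `L` determined by `(Δ, φ, ρ)`:
`π` is a nondegenerate *-representation of `C₀(X)` and `T` satisfies
`π(L(a)) = T* π(a) T` for all `a ∈ C₀(Δ)`. -/
def IsRep (Δ : Set X) (φ : X → X) (ρ : X → ℝ) {H : Type*} [NormedAddCommGroup H]
    [InnerProductSpace ℂ H] [CompleteSpace H]
    (π : C₀(X, ℂ) →⋆ₙₐ[ℂ] (H →L[ℂ] H)) (T : H →L[ℂ] H) : Prop :=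
  Dense (↑(Submodule.span ℂ {v : H | ∃ (a : C₀(X, ℂ)) (h : H), π a h = v}) : Set H) ∧
  ∀ a b : C₀(X, ℂ), (∀ x ∉ Δ, a x = 0) →
    (∀ y : X, b y = ∑' x : Fiber Δ φ y, (ρ x.1 : ℂ) * a x.1) →
    π b = star T * π a * T

open Filter Topology Set

namespace ZeroAtInftyContinuousMap

variable {E : Type*} [NormedAddCommGroup E]

theorem isCompact_le_norm [T2Space X] (a : C₀(X, E)) {ε : ℝ} (hε : 0 < ε) :
    IsCompact {x | ε ≤ ‖a x‖} := by
  obtain ⟨K, hK, hKsub⟩ :=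
    mem_cocompact.mp (NormedAddGroup.tendsto_nhds_zero.mp (zero_at_infty a) ε hε)
  refine hK.of_isClosed_subset (isClosed_le continuous_const a.continuous.norm) fun x hx => ?_
  by_contra hxK
  exact (show ‖a x‖ < ε from hKsub hxK).not_ge hx

theorem exists_extension_of_small_off_compact [T2Space X] {Δ : Set X} (hΔ : IsOpen Δ) {g : X → E}
    (hg : ContinuousOn g Δ)
    (hsmall : ∀ ε > 0, ∃ K ⊆ Δ, IsCompact K ∧ ∀ x ∈ Δ \ K, ‖g x‖ < ε) :
    ∃ c : C₀(X, E), (∀ x ∈ Δ, c x = g x) ∧ ∀ x ∉ Δ, c x = 0 := by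
  set f := Δ.indicator g
  have hf_mem : ∀ x ∈ Δ, f x = g x := fun x hx => indicator_of_mem hx g
  have hf_out : ∀ x ∉ Δ, f x = 0 := fun x hx => indicator_of_notMem hx g
  have hf_small : ∀ ε > 0, ∃ K ⊆ Δ, IsCompact K ∧ ∀ x ∉ K, ‖f x‖ < ε := by
    intro ε hε
    obtain ⟨K, hKΔ, hK, hlt⟩ := hsmall ε hε
    refine ⟨K, hKΔ, hK, fun x hxK => ?_⟩
    by_cases hx : x ∈ Δ
    · rw [hf_mem x hx]
      exact hlt x ⟨hx, hxK⟩
    · rwa [hf_out x hx, norm_zero]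
  have hf_tendsto : ∀ l : Filter X, (∀ K ⊆ Δ, IsCompact K → Kᶜ ∈ l) → Tendsto f l (𝓝 0) := by
    refine fun l hl => NormedAddGroup.tendsto_nhds_zero.mpr fun ε hε => ?_
    obtain ⟨K, hKΔ, hK, hlt⟩ := hf_small ε hε
    exact mem_of_superset (hl K hKΔ hK) hlt
  have hf_cont : Continuous f := by
    refine continuous_iff_continuousAt.mpr fun x => ?_
    by_cases hx : x ∈ Δ
    · exact (hg.congr hf_mem).continuousAt (hΔ.mem_nhds hx)
    · rw [ContinuousAt, hf_out x hx]
      exact hf_tendsto _ fun K hKΔ hK => hK.isClosed.compl_mem_nhds fun hxK => hx (hKΔ hxK)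
  exact ⟨⟨⟨f, hf_cont⟩, hf_tendsto _ fun K _ hK => hK.compl_mem_cocompact⟩, hf_mem, hf_out⟩

theorem norm_apply_le (a : C₀(X, E)) (x : X) : ‖a x‖ ≤ ‖a‖ :=
  norm_toBCF_eq_norm (f := a) ▸ a.toBCF.norm_coe_le_norm x

theorem exists_extension_mul_comp [T2Space X] {R : Type*} [NonUnitalNormedRing R] {Δ : Set X}
    (hΔ : IsOpen Δ) {φ : X → X} (hφ : ContinuousOn φ Δ) (a b : C₀(X, R))
    (hb : ∀ x ∉ Δ, b x = 0) :
    ∃ c : C₀(X, R), (∀ x ∈ Δ, c x = b x * a (φ x)) ∧ ∀ x ∉ Δ, c x = 0 := by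
  refine exists_extension_of_small_off_compact hΔ
    (b.continuous.continuousOn.mul (a.continuous.comp_continuousOn hφ)) fun ε hε => ?_
  have hδ : 0 < ε / (‖a‖ + 1) := by positivity
  refine ⟨{x | ε / (‖a‖ + 1) ≤ ‖b x‖}, fun x hx => ?_, b.isCompact_le_norm hδ, fun x hx => ?_⟩
  · by_contra hxΔ
    exact hδ.not_ge (by simpa [hb x hxΔ] using hx)
  · have hbx : ‖b x‖ < ε / (‖a‖ + 1) := not_le.mp hx.2
    calc ‖b x * a (φ x)‖ ≤ ‖b x‖ * ‖a‖ :=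
          (norm_mul_le _ _).trans (by gcongr; exact a.norm_apply_le _)
      _ ≤ ‖b x‖ * (‖a‖ + 1) := by gcongr; linarith
      _ < ε / (‖a‖ + 1) * (‖a‖ + 1) := by gcongr
      _ = ε := div_mul_cancel₀ _ (by positivity)

theorem exists_extension_comp_of_proper [T2Space X] {Δ : Set X} (hΔ : IsOpen Δ) {φ : X → X}
    (hφ : ContinuousOn φ Δ)
    (hproper : ∀ K : Set X, IsCompact K → IsCompact {x | x ∈ Δ ∧ φ x ∈ K}) (a : C₀(X, E)) :
    ∃ c : C₀(X, E), (∀ x ∈ Δ, c x = a (φ x)) ∧ ∀ x ∉ Δ, c x = 0 := by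
  refine exists_extension_of_small_off_compact hΔ (a.continuous.comp_continuousOn hφ)
    fun ε hε => ⟨{x | x ∈ Δ ∧ φ x ∈ {y | ε ≤ ‖a y‖}}, fun x hx => hx.1,
      hproper _ (a.isCompact_le_norm hε), fun x hx => not_le.mp fun h => hx.2 ⟨hx.1, h⟩⟩

end ZeroAtInftyContinuousMap

theorem tsum_fiber_mul_comp {Y : Type*} (Δ : Set Y) (φ : Y → Y) (ρ : Y → ℝ) {d e a : Y → ℂ}
    (he : ∀ x ∈ Δ, e x = d x * a (φ x)) (y : Y) :
    ∑' x : Fiber Δ φ y, (ρ x.1 : ℂ) * e x.1 = (∑' x : Fiber Δ φ y, (ρ x.1 : ℂ) * d x.1) * a y := by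
  rw [← tsum_mul_right]
  refine tsum_congr fun ⟨x, hxΔ, hxy⟩ => ?_
  subst hxy
  rw [he x hxΔ, mul_assoc]

theorem CStarRing.mul_mul_eq_of_star_mul_mul {R : Type*} [NonUnitalNormedRing R] [StarRing R]
    [CStarRing R] {A B C T : R}
    (hBC : star T * (star B * C) * T = star T * (star B * B) * T * A)
    (hCC : star T * (star C * C) * T = star A * (star T * (star B * B) * T) * A) :
    B * T * A = C * T := by
  have hCB : star T * (star C * B) * T = star A * (star T * (star B * B) * T) := by
    simpa only [star_mul, star_star, mul_assoc] using congrArg star hBC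
  rw [← sub_eq_zero, ← CStarRing.star_mul_self_eq_zero_iff]
  calc star (B * T * A - C * T) * (B * T * A - C * T)
      = star A * (star T * (star B * B) * T) * A - star A * (star T * (star B * C) * T)
        - star T * (star C * B) * T * A + star T * (star C * C) * T := by
        simp only [star_sub, star_mul]; noncomm_ring
    _ = 0 := by rw [hBC, hCB, hCC]; noncomm_ring

theorem ContinuousLinearMap.eq_zero_of_mul_eq_zero_of_mem_closure_span
    {A H : Type*} [NonUnitalNonAssocSemiring A] [Module ℂ A] [Star A]
    [NormedAddCommGroup H] [InnerProductSpace ℂ H] [CompleteSpace H]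
    (π : A →⋆ₙₐ[ℂ] (H →L[ℂ] H)) {p : A → Prop} (hp : ∀ b, p b → p (star b))
    {S : H →L[ℂ] H}
    (hrange : ∀ v, S v ∈ closure
      (↑(Submodule.span ℂ {w : H | ∃ (b : A) (h : H), p b ∧ π b h = w}) : Set H))
    (hmul : ∀ b, p b → π b * S = 0) : S = 0 := by
  ext v
  have hperp : {w : H | ∃ (b : A) (h : H), p b ∧ π b h = w} ⊆ (ℂ ∙ S v)ᗮ := by
    rintro _ ⟨b, h, hb, rfl⟩
    rw [SetLike.mem_coe, Submodule.mem_orthogonal_singleton_iff_inner_right,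
      ← adjoint_inner_left, ← star_eq_adjoint, ← map_star, ← mul_apply_eq_comp, hmul _ (hp b hb),
      zero_apply, inner_zero_left]
  have hself : S v ∈ (ℂ ∙ S v)ᗮ :=
    closure_minimal (Submodule.span_le.mpr hperp) (Submodule.isClosed_orthogonal _) (hrange v)
  simpa using Submodule.mem_orthogonal_singleton_iff_inner_right.mp hself

namespace IsRep

variable {Δ : Set X} {φ : X → X} {ρ : X → ℝ} {H : Type*} [NormedAddCommGroup H]
  [InnerProductSpace ℂ H] [CompleteSpace H] {π : C₀(X, ℂ) →⋆ₙₐ[ℂ] (H →L[ℂ] H)} {T : H →L[ℂ] H}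

theorem mul_mul_eq_mul_of_eqOn {M : ℝ} (hpot : IsPotential Δ φ ρ M) (hrep : IsRep Δ φ ρ π T)
    {a b c : C₀(X, ℂ)} (hb : ∀ x ∉ Δ, b x = 0) (hcΔ : ∀ x ∈ Δ, c x = b x * a (φ x))
    (hc0 : ∀ x ∉ Δ, c x = 0) :
    π b * T * π a = π c * T := by
  have hbb : ∀ x ∉ Δ, (star b * b) x = 0 := fun x hx => by simp [hb x hx]
  obtain ⟨f, hf⟩ := hpot.2.2.2 (star b * b) hbb
  have hF : star T * π (star b * b) * T = π f := (hrep.2 _ f hbb hf).symm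
  have hL : ∀ d g : C₀(X, ℂ), (∀ x ∈ Δ, d x = (star b * b) x * g (φ x)) →
      (∀ x ∉ Δ, d x = 0) → star T * π d * T = π f * π g := by
    intro d g hdΔ hd0
    rw [← map_mul, hrep.2 d (f * g) hd0 fun y => ?_]
    rw [ZeroAtInftyContinuousMap.mul_apply, hf y, tsum_fiber_mul_comp Δ φ ρ hdΔ]
  apply CStarRing.mul_mul_eq_of_star_mul_mul
  · rw [← map_star π b, ← map_mul, ← map_mul, hF,
      hL (star b * c) a _ fun x hx => by simp [hc0 x hx]]
    intro x hx
    simp only [ZeroAtInftyContinuousMap.mul_apply, ZeroAtInftyContinuousMap.star_apply, hcΔ x hx]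
    ring
  · rw [← map_star π c, ← map_star π b, ← map_star π a, ← map_mul π, ← map_mul π, hF,
      hL (star c * c) (star a * a) _ fun x hx => by simp [hc0 x hx], ← map_mul, ← map_mul,
      ← map_mul, mul_comm (star a) f, mul_assoc]
    intro x hx
    simp only [ZeroAtInftyContinuousMap.mul_apply, ZeroAtInftyContinuousMap.star_apply, hcΔ x hx,
      star_mul']
    ring

theorem mul_eq_mul_of_eqOn {M : ℝ} (hpot : IsPotential Δ φ ρ M) (hrep : IsRep Δ φ ρ π T)
    (hrange : ∀ v : H, T v ∈ closure (↑(Submodule.span ℂ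
      {w : H | ∃ (b : C₀(X, ℂ)) (h : H), (∀ x ∉ Δ, b x = 0) ∧ π b h = w}) : Set H))
    {a c : C₀(X, ℂ)} (hcΔ : ∀ x ∈ Δ, c x = a (φ x)) (hc0 : ∀ x ∉ Δ, c x = 0) :
    T * π a = π c * T := by
  rw [← sub_eq_zero]
  refine ContinuousLinearMap.eq_zero_of_mul_eq_zero_of_mem_closure_span π
    (p := fun b => ∀ x ∉ Δ, b x = 0) (fun b hb x hx => by simp [hb x hx]) (fun v => ?_)
    fun b hb => ?_
  · rw [← Submodule.topologicalClosure_coe] at hrange ⊢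
    exact Submodule.sub_mem _ (hrange (π a v)) (Submodule.le_topologicalClosure _
      (Submodule.subset_span ⟨c, T v, hc0, rfl⟩))
  · have hbc := mul_mul_eq_mul_of_eqOn (a := a) (c := b * c) hpot hrep hb
      (fun x hx => by simp [hcΔ x hx]) fun x hx => by simp [hb x hx]
    rw [mul_sub, ← mul_assoc, hbc, ← mul_assoc, ← map_mul, sub_self]

end IsRep

theorem representation_commutation_general
    {X : Type*} [TopologicalSpace X] [T2Space X]
    (Δ : Set X) (φ : X → X) (ρ : X → ℝ) (M : ℝ)
    (hΔ : IsOpen Δ) (hφ : ContinuousOn φ Δ)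
    (hpot : IsPotential Δ φ ρ M)
    {H : Type*} [NormedAddCommGroup H] [InnerProductSpace ℂ H] [CompleteSpace H]
    (π : C₀(X, ℂ) →⋆ₙₐ[ℂ] (H →L[ℂ] H)) (T : H →L[ℂ] H)
    (hrep : IsRep Δ φ ρ π T) :
    (∀ a b : C₀(X, ℂ), (∀ x ∉ Δ, b x = 0) →
      ∃ c : C₀(X, ℂ), (∀ x ∈ Δ, c x = b x * a (φ x)) ∧ (∀ x ∉ Δ, c x = 0) ∧
        π b * T * π a = π c * T) ∧
    ((∀ K : Set X, IsCompact K → IsCompact {x | x ∈ Δ ∧ φ x ∈ K}) →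
      (∀ v : H, T v ∈ closure (↑(Submodule.span ℂ
          {w : H | ∃ (b : C₀(X, ℂ)) (h : H), (∀ x ∉ Δ, b x = 0) ∧ π b h = w}) : Set H)) →
      ∀ a : C₀(X, ℂ), ∃ c : C₀(X, ℂ), (∀ x ∈ Δ, c x = a (φ x)) ∧ (∀ x ∉ Δ, c x = 0) ∧
        T * π a = π c * T) := by
  refine ⟨fun a b hb => ?_, fun hproper hrange a => ?_⟩
  · obtain ⟨c, hcΔ, hc0⟩ := ZeroAtInftyContinuousMap.exists_extension_mul_comp hΔ hφ a b hb
    exact ⟨c, hcΔ, hc0, hrep.mul_mul_eq_mul_of_eqOn hpot hb hcΔ hc0⟩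
  · obtain ⟨c, hcΔ, hc0⟩ :=
      ZeroAtInftyContinuousMap.exists_extension_comp_of_proper hΔ hφ hproper a
    exact ⟨c, hcΔ, hc0, hrep.mul_eq_mul_of_eqOn hpot hrange hcΔ hc0⟩

/-- Commutation relations: `π(b) T π(a) = π(b·(a∘φ)) T` for all `a ∈ C₀(X)`,
`b ∈ C₀(Δ)`; and if `φ` is proper and `T(H) ⊆ closure(span π(C₀(Δ))H)`, then
`T π(a) = π(a∘φ) T` for all `a ∈ C₀(X)`. -/
theorem representation_commutation
    {X : Type*} [TopologicalSpace X] [LocallyCompactSpace X] [T2Space X]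
    (Δ : Set X) (φ : X → X) (ρ : X → ℝ) (M : ℝ)
    (hΔ : IsOpen Δ) (hφ : ContinuousOn φ Δ)
    (hcount : ∀ y : X, (Fiber Δ φ y).Countable)
    (hpot : IsPotential Δ φ ρ M)
    {H : Type*} [NormedAddCommGroup H] [InnerProductSpace ℂ H] [CompleteSpace H]
    (π : C₀(X, ℂ) →⋆ₙₐ[ℂ] (H →L[ℂ] H)) (T : H →L[ℂ] H)
    (hrep : IsRep Δ φ ρ π T) :
    (∀ a b : C₀(X, ℂ), (∀ x ∉ Δ, b x = 0) →
      ∃ c : C₀(X, ℂ), (∀ x ∈ Δ, c x = b x * a (φ x)) ∧ (∀ x ∉ Δ, c x = 0) ∧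
        π b * T * π a = π c * T) ∧
    ((∀ K : Set X, IsCompact K → IsCompact {x | x ∈ Δ ∧ φ x ∈ K}) →
      (∀ v : H, T v ∈ closure (↑(Submodule.span ℂ
          {w : H | ∃ (b : C₀(X, ℂ)) (h : H), (∀ x ∉ Δ, b x = 0) ∧ π b h = w}) : Set H)) →
      ∀ a : C₀(X, ℂ), ∃ c : C₀(X, ℂ), (∀ x ∈ Δ, c x = a (φ x)) ∧ (∀ x ∉ Δ, c x = 0) ∧
        T * π a = π c * T) :=
  representation_commutation_general Δ φ ρ M hΔ hφ hpot π T hrep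
end
end

section
/- Let (π, T) be a representation of L on a Hilbert space H. Then the closed linear span of {π(a) T T* π(b) : a, b ∈ C₀(Δ)} in B(H) is closed under multiplication and adjoints, hence is a C*-subalgebra of B(H); consequently π(C₀(X)) ∩ (this closed span) is a (two-sided, closed) ideal in π(C₀(X)). -/
/-!
The product of two generators collapses to a single generator: the middle factor
`T* π(b c) T` equals `π(L(b c))`, and the covariance relation `π(a) T π(g) = π(a · (g ∘ φ)) T`
absorbs it into the left factor. That relation holds because `D = π(a) T π(g) - π(a · (g ∘ φ)) T`
has `D* D = 0`: expanding `D* D` and applying `T* π(e) T = π(L(e))` to each term leaves `π` of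
an expression that vanishes by the module property `L(e · (g ∘ φ)) = L(e) g`. Generators are
also stable under adjoints and under multiplication by `π(C₀(X))` on either side, and all these
stability properties pass to the closed linear span by linearity and continuity.
-/

open scoped ZeroAtInfty

noncomputable section

variable {X : Type*} [TopologicalSpace X]

open scoped BoundedContinuousFunction
open Filter Topology Submodule

section ClosureSpan

variable {R A : Type*} [CommSemiring R] [Semiring A] [Algebra R A] [TopologicalSpace A]
  {G : Set A}

lemma mul_mem_closure_span [ContinuousMul A] (hG : ∀ x ∈ G, ∀ y ∈ G, x * y ∈ G) {x y : A}
    (hx : x ∈ closure (span R G : Set A)) (hy : y ∈ closure (span R G : Set A)) :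
    x * y ∈ closure (span R G : Set A) := by
  have hspan : span R G * span R G ≤ span R G := by
    rw [span_mul_span]
    exact span_le.mpr (Set.mul_subset_iff.mpr fun x hx y hy => subset_span (hG x hx y hy))
  exact map_mem_closure₂ continuous_mul hx hy fun x hx y hy => hspan (mul_mem_mul hx hy)

lemma mul_left_mem_closure_span [ContinuousMul A] {u : A} (hG : ∀ x ∈ G, u * x ∈ G) {x : A}
    (hx : x ∈ closure (span R G : Set A)) : u * x ∈ closure (span R G : Set A) := by
  have hspan : span R G ≤ (span R G).comap (LinearMap.mulLeft R u) :=
    span_le.mpr fun x hx => subset_span (hG x hx)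
  exact map_mem_closure (continuous_const_mul u) hx fun y hy => hspan hy

lemma mul_right_mem_closure_span [ContinuousMul A] {u : A} (hG : ∀ x ∈ G, x * u ∈ G) {x : A}
    (hx : x ∈ closure (span R G : Set A)) : x * u ∈ closure (span R G : Set A) := by
  have hspan : span R G ≤ (span R G).comap (LinearMap.mulRight R u) :=
    span_le.mpr fun x hx => subset_span (hG x hx)
  exact map_mem_closure (f := (· * u)) (continuous_mul_const u) hx fun y hy => hspan hy

lemma star_mem_closure_span [StarRing R] [StarRing A] [StarModule R A] [ContinuousStar A]
    (hG : ∀ x ∈ G, star x ∈ G) {x : A} (hx : x ∈ closure (span R G : Set A)) :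
    star x ∈ closure (span R G : Set A) := by
  have hspan : span R G ≤ (span R G).comap (starLinearEquiv R (A := A)).toLinearMap :=
    span_le.mpr fun x hx => subset_span (hG x hx)
  exact map_mem_closure continuous_star hx fun y hy => hspan hy

end ClosureSpan

namespace ZeroAtInftyContinuousMap

variable {Y β : Type*} [TopologicalSpace Y] [NormedRing β]

lemma exists_mul_comp {Δ : Set X} {φ : X → Y} (hΔ : IsOpen Δ)
    (hφ : ContinuousOn φ Δ) (a : C₀(X, β)) (ha : ∀ x ∉ Δ, a x = 0) (g : Y →ᵇ β) :
    ∃ c : C₀(X, β), (∀ x, c x = a x * g (φ x)) ∧ ∀ x ∉ Δ, c x = 0 := by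
  have tendsto_zero {l : Filter X} (hl : Tendsto a l (𝓝 0)) :
      Tendsto (fun x => a x * g (φ x)) l (𝓝 0) := by
    refine squeeze_zero_norm (fun x => (norm_mul_le _ _).trans
      (mul_le_mul_of_nonneg_left (g.norm_coe_le_norm (φ x)) (norm_nonneg _))) ?_
    simpa using hl.norm.mul_const ‖g‖
  have hcont : Continuous fun x => a x * g (φ x) := by
    refine continuous_iff_continuousAt.mpr fun x₀ => ?_
    by_cases hx : x₀ ∈ Δ
    · exact a.continuous.continuousAt.mul
        (g.continuous.continuousAt.comp (hφ.continuousAt (hΔ.mem_nhds hx)))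
    · have hx₀ := ha x₀ hx
      have := tendsto_zero (hx₀ ▸ a.continuous.tendsto x₀)
      rwa [ContinuousAt, hx₀, zero_mul]
  exact ⟨⟨⟨_, hcont⟩, tendsto_zero a.zero_at_infty'⟩, fun _ => rfl,
    fun x hx => by simp [ha x hx]⟩

end ZeroAtInftyContinuousMap

section Transfer

open ZeroAtInftyContinuousMap

def IsTransferOf (Δ : Set X) (φ : X → X) (ρ : X → ℝ) (a b : C₀(X, ℂ)) : Prop :=
  ∀ y, b y = ∑' x : Fiber Δ φ y, (ρ x.1 : ℂ) * a x.1

variable {Δ : Set X} {φ : X → X} {ρ : X → ℝ}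

lemma IsTransferOf.mul_comp {p e g c : C₀(X, ℂ)} (he : IsTransferOf Δ φ ρ p e)
    (hc : ∀ x, c x = p x * g (φ x)) : IsTransferOf Δ φ ρ c (e * g) := by
  intro y
  rw [mul_apply, he y, ← tsum_mul_right]
  refine tsum_congr fun x => ?_
  rw [hc, x.2.2, mul_assoc]

variable {H : Type*} [NormedAddCommGroup H] [InnerProductSpace ℂ H] [CompleteSpace H]
  {π : C₀(X, ℂ) →⋆ₙₐ[ℂ] (H →L[ℂ] H)} {T : H →L[ℂ] H}

lemma IsRep.map_mul_T_mul_map (hrep : IsRep Δ φ ρ π T) {a e g c : C₀(X, ℂ)}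
    (ha : ∀ x ∉ Δ, a x = 0) (he : IsTransferOf Δ φ ρ (star a * a) e)
    (hc : ∀ x, c x = a x * g (φ x)) :
    π a * T * π g = π c * T := by
  have transfer {p : C₀(X, ℂ)} (g' : C₀(X, ℂ)) (hp : ∀ x, p x = (star a * a) x * g' (φ x)) :
      star T * π p * T = π (e * g') := by
    refine (hrep.2 p _ (fun x hx => ?_) (he.mul_comp hp)).symm
    simp [hp, ha x hx]
  have h₁ : star T * π (star a * a) * T = π e :=
    (hrep.2 _ _ (fun x hx => by simp [ha x hx]) he).symm
  have h₂ : star T * π (star a * c) * T = π (e * g) :=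
    transfer g fun x => by simp only [mul_apply, star_apply, hc]; ring
  have h₃ : star T * π (star c * a) * T = π (e * star g) :=
    transfer (star g) fun x => by simp only [mul_apply, star_apply, hc, star_mul']; ring
  have h₄ : star T * π (star c * c) * T = π (e * (star g * g)) :=
    transfer (star g * g) fun x => by simp only [mul_apply, star_apply, hc, star_mul']; ring
  have expand : star (π a * T * π g - π c * T) * (π a * T * π g - π c * T) =
      star (π g) * (star T * π (star a * a) * T) * π g
        - star (π g) * (star T * π (star a * c) * T)
        - (star T * π (star c * a) * T) * π g
        + star T * π (star c * c) * T := by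
    simp only [star_sub, star_mul, map_mul, map_star]
    noncomm_ring
  have hD : star (π a * T * π g - π c * T) * (π a * T * π g - π c * T) = 0 := by
    rw [expand, h₁, h₂, h₃, h₄, ← map_star π g]
    simp only [map_mul]
    noncomm_ring
  exact sub_eq_zero.mp ((CStarRing.star_mul_self_eq_zero_iff _).mp hD)

end Transfer

section Generators

variable {H : Type*} [NormedAddCommGroup H] [InnerProductSpace ℂ H] [CompleteSpace H]

def transferGenerators (Δ : Set X) (π : C₀(X, ℂ) →⋆ₙₐ[ℂ] (H →L[ℂ] H)) (T : H →L[ℂ] H) :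
    Set (H →L[ℂ] H) :=
  {x | ∃ a b : C₀(X, ℂ), (∀ z ∉ Δ, a z = 0) ∧ (∀ z ∉ Δ, b z = 0) ∧ x = π a * T * star T * π b}

variable {Δ : Set X} {π : C₀(X, ℂ) →⋆ₙₐ[ℂ] (H →L[ℂ] H)} {T : H →L[ℂ] H} {x y : H →L[ℂ] H}

lemma mul_mem_transferGenerators {φ : X → X} {ρ : X → ℝ} {M : ℝ} (hΔ : IsOpen Δ)
    (hφ : ContinuousOn φ Δ) (hpot : IsPotential Δ φ ρ M) (hrep : IsRep Δ φ ρ π T)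
    (hx : x ∈ transferGenerators Δ π T) (hy : y ∈ transferGenerators Δ π T) :
    x * y ∈ transferGenerators Δ π T := by
  obtain ⟨a, b, ha, hb, rfl⟩ := hx
  obtain ⟨c, d, -, hd, rfl⟩ := hy
  have hbc : ∀ z ∉ Δ, (b * c) z = 0 := fun z hz => by simp [hb z hz]
  obtain ⟨e, he⟩ := hpot.2.2.2 (b * c) hbc
  obtain ⟨f, hf⟩ := hpot.2.2.2 (star a * a) fun z hz => by simp [ha z hz]
  obtain ⟨a', ha', ha'0⟩ := ZeroAtInftyContinuousMap.exists_mul_comp hΔ hφ a ha e.toBCF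
  refine ⟨a', d, ha'0, hd, ?_⟩
  calc π a * T * star T * π b * (π c * T * star T * π d)
      = π a * T * (star T * π (b * c) * T) * star T * π d := by rw [map_mul]; noncomm_ring
    _ = π a * T * π e * star T * π d := by rw [← hrep.2 _ _ hbc he]
    _ = π a' * T * star T * π d := by rw [hrep.map_mul_T_mul_map ha hf ha']

lemma star_mem_transferGenerators (hx : x ∈ transferGenerators Δ π T) :
    star x ∈ transferGenerators Δ π T := by
  obtain ⟨a, b, ha, hb, rfl⟩ := hx
  refine ⟨star b, star a, fun z hz => by simp [hb z hz], fun z hz => by simp [ha z hz], ?_⟩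
  simp only [star_mul, star_star, map_star]
  noncomm_ring

lemma map_mul_mem_transferGenerators (u : C₀(X, ℂ)) (hx : x ∈ transferGenerators Δ π T) :
    π u * x ∈ transferGenerators Δ π T := by
  obtain ⟨a, b, ha, hb, rfl⟩ := hx
  refine ⟨u * a, b, fun z hz => by simp [ha z hz], hb, ?_⟩
  rw [map_mul]
  noncomm_ring

lemma mul_map_mem_transferGenerators (u : C₀(X, ℂ)) (hx : x ∈ transferGenerators Δ π T) :
    x * π u ∈ transferGenerators Δ π T := by
  obtain ⟨a, b, ha, hb, rfl⟩ := hx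
  refine ⟨a, b * u, ha, fun z hz => by simp [hb z hz], ?_⟩
  rw [map_mul]
  noncomm_ring

end Generators

theorem closed_span_is_algebra_and_ideal_general
    {X : Type*} [TopologicalSpace X]
    (Δ : Set X) (φ : X → X) (ρ : X → ℝ) (M : ℝ)
    (hΔ : IsOpen Δ) (hφ : ContinuousOn φ Δ)
    (hpot : IsPotential Δ φ ρ M)
    {H : Type*} [NormedAddCommGroup H] [InnerProductSpace ℂ H] [CompleteSpace H]
    (π : C₀(X, ℂ) →⋆ₙₐ[ℂ] (H →L[ℂ] H)) (T : H →L[ℂ] H)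
    (hrep : IsRep Δ φ ρ π T)
    (S : Set (H →L[ℂ] H))
    (hS : S = closure (↑(Submodule.span ℂ {x : H →L[ℂ] H | ∃ a b : C₀(X, ℂ),
      (∀ z ∉ Δ, a z = 0) ∧ (∀ z ∉ Δ, b z = 0) ∧ x = π a * T * star T * π b}) :
        Set (H →L[ℂ] H))) :
    (∀ x ∈ S, ∀ y ∈ S, x * y ∈ S) ∧
    (∀ x ∈ S, star x ∈ S) ∧
    (∀ a : C₀(X, ℂ), ∀ x ∈ Set.range ⇑π ∩ S,
      π a * x ∈ Set.range ⇑π ∩ S ∧ x * π a ∈ Set.range ⇑π ∩ S) := by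
  subst hS
  refine ⟨fun x hx y hy => ?_, fun x hx => ?_, ?_⟩
  · exact mul_mem_closure_span
      (fun _ hx _ hy => mul_mem_transferGenerators hΔ hφ hpot hrep hx hy) hx hy
  · exact star_mem_closure_span (fun _ => star_mem_transferGenerators) hx
  · rintro u _ ⟨⟨v, rfl⟩, hv⟩
    exact ⟨⟨⟨u * v, map_mul π u v⟩,
        mul_left_mem_closure_span (fun _ => map_mul_mem_transferGenerators u) hv⟩,
      ⟨⟨v * u, map_mul π v u⟩,
        mul_right_mem_closure_span (fun _ => mul_map_mem_transferGenerators u) hv⟩⟩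

/-- The closed linear span of `{π(a) T T* π(b) : a, b ∈ C₀(Δ)}` is closed
under multiplication and adjoints, and its intersection with `π(C₀(X))` is an ideal in
`π(C₀(X))`. -/
theorem closed_span_is_algebra_and_ideal
    {X : Type*} [TopologicalSpace X] [LocallyCompactSpace X] [T2Space X]
    (Δ : Set X) (φ : X → X) (ρ : X → ℝ) (M : ℝ)
    (hΔ : IsOpen Δ) (hφ : ContinuousOn φ Δ)
    (hcount : ∀ y : X, (Fiber Δ φ y).Countable)
    (hpot : IsPotential Δ φ ρ M)
    {H : Type*} [NormedAddCommGroup H] [InnerProductSpace ℂ H] [CompleteSpace H]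
    (π : C₀(X, ℂ) →⋆ₙₐ[ℂ] (H →L[ℂ] H)) (T : H →L[ℂ] H)
    (hrep : IsRep Δ φ ρ π T)
    (S : Set (H →L[ℂ] H))
    (hS : S = closure (↑(Submodule.span ℂ {x : H →L[ℂ] H | ∃ a b : C₀(X, ℂ),
      (∀ z ∉ Δ, a z = 0) ∧ (∀ z ∉ Δ, b z = 0) ∧ x = π a * T * star T * π b}) :
        Set (H →L[ℂ] H))) :
    (∀ x ∈ S, ∀ y ∈ S, x * y ∈ S) ∧
    (∀ x ∈ S, star x ∈ S) ∧
    (∀ a : C₀(X, ℂ), ∀ x ∈ Set.range ⇑π ∩ S,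
      π a * x ∈ Set.range ⇑π ∩ S ∧ x * π a ∈ Set.range ⇑π ∩ S) :=
  closed_span_is_algebra_and_ideal_general Δ φ ρ M hΔ hφ hpot π T hrep S hS
end
end

section
/- Consider the Hilbert space ℓ²(X × ℤ) with standard orthonormal basis {δ_{(x,n)}} and the *-homomorphism π̃ : C₀(X) → B(ℓ²(X × ℤ)) given by (π̃(a)h)(x,n) = a(x)h(x,n). Then: (i) there is a unique bounded operator T̃ ∈ B(ℓ²(X × ℤ)) with (T̃h)(x,n) = √ρ(x)·h(φ(x), n−1) for x ∈ Δ and (T̃h)(x,n) = 0 for x ∉ Δ; (ii) for all integers k, l ≥ 0, all a ∈ C₀(Δ_k), b ∈ C₀(Δ_l), and all (x,n) ∈ X × ℤ, the diagonal matrix coefficient ⟨δ_{(x,n)}, π̃(a) T̃ᵏ (T̃*)ˡ π̃(b) δ_{(x,n)}⟩ equals 0 if k ≠ l, and equals a(x)·b(x)·ρ_k(x) if k = l (the value being 0 when x ∉ Δ_k, since a vanishes there). -/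
open scoped ZeroAtInfty

noncomputable section

variable {X : Type*} [TopologicalSpace X]

/-- `Δ_n`: the natural domain of `φⁿ`. -/
def Dn (Δ : Set X) (φ : X → X) (n : ℕ) : Set X := {x | ∀ k < n, φ^[k] x ∈ Δ}

/-- `ρ_n(x) = Π_{i=0}^{n-1} ρ(φⁱ(x))`, the cocycle generated by `ρ`. -/
def rhon (φ : X → X) (ρ : X → ℝ) (n : ℕ) (x : X) : ℝ :=
  ∏ i ∈ Finset.range n, ρ (φ^[i] x)

/-- The fibre of `φⁿ` over `y`. -/
def Fibern (Δ : Set X) (φ : X → X) (n : ℕ) (y : X) : Set X :=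
  {x | x ∈ Dn Δ φ n ∧ φ^[n] x = y}

/-- The defining property of the regular operator `T̃` on `ℓ²(X × ℤ)`:
`(T̃ h)(x, n) = √ρ(x) · h(φ(x), n − 1)` for `x ∈ Δ` and `(T̃ h)(x, n) = 0` otherwise. -/
def IsRegularOperator (Δ : Set X) (φ : X → X) (ρ : X → ℝ)
    (T : lp (fun _ : X × ℤ => ℂ) 2 →L[ℂ] lp (fun _ : X × ℤ => ℂ) 2) : Prop :=
  (∀ (h : lp (fun _ : X × ℤ => ℂ) 2) (p : X × ℤ), p.1 ∈ Δ →
      T h p = (Real.sqrt (ρ p.1) : ℂ) * h (φ p.1, p.2 - 1)) ∧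
  (∀ (h : lp (fun _ : X × ℤ => ℂ) 2) (p : X × ℤ), p.1 ∉ Δ → T h p = 0)

/-!
`T̃` is the weighted composition operator `h ↦ w · (h ∘ σ)` on `ℓ²(X × ℤ)` with shift
`σ (x, n) = (φ x, n - 1)` and weight `w (x, n) = √ρ(x)` on `Δ`, `0` off `Δ`. Grouping
`Σ_i |w i|² |h (σ i)|²` by the value of `σ i` bounds it by `M ‖h‖²`, since `|w|²` sums to at
most `M` over each fibre of `σ`. The adjoint sends `δ_i` to `conj (w i) δ_(σ i)`, so `T̃*ᵏ δ_(x,n)`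
is a multiple of `δ_(φᵏ x, n - k)` whose coefficient has squared modulus `ρ_k(x)` on `Δ_k` and
vanishes off it. The second coordinate `n - k` makes these vectors orthogonal for distinct `k`,
and `π̃(a)`, `π̃(b)` act diagonally on the basis.
-/

open scoped InnerProductSpace ComplexConjugate

section WeightedComposition

variable {𝕜 ι κ : Type*} [RCLike 𝕜]

def IsWeightedComposition (σ : ι → κ) (w : ι → 𝕜)
    (T : lp (fun _ : κ => 𝕜) 2 →L[𝕜] lp (fun _ : ι => 𝕜) 2) : Prop :=
  ∀ h i, T h i = w i * h (σ i)

variable {σ : ι → κ} {w : ι → 𝕜} {T : lp (fun _ : κ => 𝕜) 2 →L[𝕜] lp (fun _ : ι => 𝕜) 2}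

theorem sum_norm_mul_comp_sq_le {C : ℝ}
    (hw : ∀ j (S : Finset ι), (∀ i ∈ S, σ i = j) → ∑ i ∈ S, ‖w i‖ ^ 2 ≤ C)
    (h : lp (fun _ : κ => 𝕜) 2) (S : Finset ι) :
    ∑ i ∈ S, ‖w i * h (σ i)‖ ^ 2 ≤ (√C * ‖h‖) ^ 2 := by
  classical
  calc ∑ i ∈ S, ‖w i * h (σ i)‖ ^ 2
      = ∑ j ∈ S.image σ, (∑ i ∈ S with σ i = j, ‖w i‖ ^ 2) * ‖h j‖ ^ 2 := by
        rw [← Finset.sum_fiberwise_of_maps_to fun i hi => Finset.mem_image_of_mem σ hi]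
        refine Finset.sum_congr rfl fun j _ => ?_
        rw [Finset.sum_mul]
        refine Finset.sum_congr rfl fun i hi => ?_
        rw [(Finset.mem_filter.mp hi).2, norm_mul, mul_pow]
    _ ≤ ∑ j ∈ S.image σ, max C 0 * ‖h j‖ ^ 2 := by
        refine Finset.sum_le_sum fun j _ => mul_le_mul_of_nonneg_right ?_ (by positivity)
        exact (hw j _ fun i hi => (Finset.mem_filter.mp hi).2).trans (le_max_left _ _)
    _ ≤ max C 0 * ‖h‖ ^ 2 := by
        rw [← Finset.mul_sum]
        gcongr
        simpa using lp.sum_rpow_le_norm_rpow (p := 2) (by norm_num) h (S.image σ)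
    _ = (√C * ‖h‖) ^ 2 := by rw [mul_pow, Real.sq_sqrt']

theorem IsWeightedComposition.exists {C : ℝ}
    (hw : ∀ j (S : Finset ι), (∀ i ∈ S, σ i = j) → ∑ i ∈ S, ‖w i‖ ^ 2 ≤ C) :
    ∃ T, IsWeightedComposition σ w T := by
  have hmem (h : lp (fun _ : κ => 𝕜) 2) : Memℓp (fun i => w i * h (σ i)) 2 :=
    memℓp_gen' fun S => by simpa using sum_norm_mul_comp_sq_le hw h S
  let L : lp (fun _ : κ => 𝕜) 2 →ₗ[𝕜] lp (fun _ : ι => 𝕜) 2 :=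
    { toFun h := ⟨_, hmem h⟩
      map_add' h g := lp.ext <| funext fun i => mul_add _ _ _
      map_smul' c h := lp.ext <| funext fun i => mul_left_comm _ _ _ }
  refine ⟨L.mkContinuous √C fun h => ?_, fun h i => rfl⟩
  refine lp.norm_le_of_forall_sum_le (by norm_num) (by positivity) fun S => ?_
  simp only [ENNReal.toReal_ofNat, Real.rpow_two]
  exact sum_norm_mul_comp_sq_le hw h S

theorem IsWeightedComposition.unique {T' : lp (fun _ : κ => 𝕜) 2 →L[𝕜] lp (fun _ : ι => 𝕜) 2}
    (hT : IsWeightedComposition σ w T) (hT' : IsWeightedComposition σ w T') : T = T' := by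
  ext h i
  rw [hT, hT']

variable [DecidableEq ι]

theorem lp.inner_single_one_left (i : ι) (f : lp (fun _ : ι => 𝕜) 2) :
    ⟪lp.single 2 i (1 : 𝕜), f⟫_𝕜 = f i := by
  simp [lp.inner_single_left]

theorem IsWeightedComposition.inner_single_mul_mul {f g : ι → 𝕜}
    {A B : lp (fun _ : ι => 𝕜) 2 →L[𝕜] lp (fun _ : ι => 𝕜) 2}
    (hA : IsWeightedComposition id f A) (hB : IsWeightedComposition id g B)
    (S : lp (fun _ : ι => 𝕜) 2 →L[𝕜] lp (fun _ : ι => 𝕜) 2) (i : ι) :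
    ⟪lp.single 2 i 1, (A * S * B) (lp.single 2 i 1)⟫_𝕜 =
      f i * g i * ⟪lp.single 2 i 1, S (lp.single 2 i 1)⟫_𝕜 := by
  have hBi : B (lp.single 2 i 1) = g i • lp.single 2 i 1 := by
    ext j
    rw [hB, id]
    by_cases hj : j = i <;> simp [hj]
  simp only [mul_apply_eq_comp, lp.inner_single_one_left, hA _ i, hBi, map_smul,
    lp.coeFn_smul, Pi.smul_apply, smul_eq_mul, id]
  ring

variable [DecidableEq κ]

theorem IsWeightedComposition.adjoint_apply_single (hT : IsWeightedComposition σ w T) (i : ι) :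
    T.adjoint (lp.single 2 i 1) = conj (w i) • lp.single 2 (σ i) 1 := by
  ext j
  rw [← lp.inner_single_one_left, ContinuousLinearMap.adjoint_inner_right, ← inner_conj_symm,
    lp.inner_single_one_left, hT]
  by_cases hj : σ i = j
  · simp [hj]
  · simp [hj, Ne.symm hj]

theorem IsWeightedComposition.star_pow_apply_single {σ : ι → ι}
    {T : lp (fun _ : ι => 𝕜) 2 →L[𝕜] lp (fun _ : ι => 𝕜) 2}
    (hT : IsWeightedComposition σ w T) (k : ℕ) (i : ι) :
    (star T ^ k) (lp.single 2 i 1) =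
      conj (∏ j ∈ Finset.range k, w (σ^[j] i)) • lp.single 2 (σ^[k] i) 1 := by
  induction k generalizing i with
  | zero => simp
  | succ k ih =>
    rw [pow_succ, mul_apply_eq_comp, ContinuousLinearMap.star_eq_adjoint, hT.adjoint_apply_single,
      map_smul, ← ContinuousLinearMap.star_eq_adjoint, ih, smul_smul, Finset.prod_range_succ',
      map_mul, Function.iterate_succ_apply, mul_comm]
    simp only [Function.iterate_succ_apply, Function.iterate_zero_apply]

theorem IsWeightedComposition.inner_single_pow_mul_star_pow {σ : ι → ι}
    {T : lp (fun _ : ι => 𝕜) 2 →L[𝕜] lp (fun _ : ι => 𝕜) 2}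
    (hT : IsWeightedComposition σ w T) (k l : ℕ) (i : ι) :
    ⟪lp.single 2 i 1, (T ^ k * star T ^ l) (lp.single 2 i 1)⟫_𝕜 =
      if σ^[k] i = σ^[l] i then
        (∏ j ∈ Finset.range k, w (σ^[j] i)) * conj (∏ j ∈ Finset.range l, w (σ^[j] i))
      else 0 := by
  rw [mul_apply_eq_comp, ← ContinuousLinearMap.adjoint_inner_left,
    ← ContinuousLinearMap.star_eq_adjoint, star_pow, hT.star_pow_apply_single,
    hT.star_pow_apply_single, inner_smul_left, inner_smul_right, lp.inner_single_one_left,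
    RCLike.conj_conj]
  by_cases hkl : σ^[k] i = σ^[l] i <;> simp [hkl]

end WeightedComposition

section RegularOperator

variable {α : Type*} {Δ : Set α} {φ : α → α} {ρ : α → ℝ}

def regularShift (φ : α → α) (p : α × ℤ) : α × ℤ := (φ p.1, p.2 - 1)

def regularWeight (Δ : Set α) (ρ : α → ℝ) (p : α × ℤ) : ℂ :=
  Δ.indicator (fun x => (√(ρ x) : ℂ)) p.1

theorem regularShift_iterate (k : ℕ) (p : α × ℤ) :
    (regularShift φ)^[k] p = (φ^[k] p.1, p.2 - k) := by
  induction k generalizing p with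
  | zero => simp
  | succ k ih =>
    rw [Function.iterate_succ_apply, ih, regularShift, Function.iterate_succ_apply]
    simp only [Prod.mk.injEq, true_and]
    push_cast
    ring

theorem norm_regularWeight_sq (hρ : ∀ x ∈ Δ, 0 ≤ ρ x) (p : α × ℤ) :
    ‖regularWeight Δ ρ p‖ ^ 2 = Δ.indicator ρ p.1 := by
  by_cases hp : p.1 ∈ Δ
  · rw [regularWeight, Set.indicator_of_mem hp, Set.indicator_of_mem hp, Complex.norm_real,
      Real.norm_of_nonneg (Real.sqrt_nonneg _), Real.sq_sqrt (hρ _ hp)]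
  · simp [regularWeight, hp]

theorem isRegularOperator_iff {T : lp (fun _ : α × ℤ => ℂ) 2 →L[ℂ] lp (fun _ : α × ℤ => ℂ) 2} :
    IsRegularOperator Δ φ ρ T ↔ IsWeightedComposition (regularShift φ) (regularWeight Δ ρ) T := by
  refine ⟨fun hT h p => ?_, fun hT => ⟨fun h p hp => ?_, fun h p hp => ?_⟩⟩
  · by_cases hp : p.1 ∈ Δ
    · rw [hT.1 h p hp, regularWeight, Set.indicator_of_mem hp]; rfl
    · rw [hT.2 h p hp, regularWeight, Set.indicator_of_notMem hp, zero_mul]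
  · rw [hT, regularWeight, Set.indicator_of_mem hp]; rfl
  · rw [hT, regularWeight, Set.indicator_of_notMem hp, zero_mul]

theorem norm_prod_regularWeight_sq (hρ : ∀ x ∈ Δ, 0 ≤ ρ x) (k : ℕ) (p : α × ℤ) :
    ‖∏ j ∈ Finset.range k, regularWeight Δ ρ ((regularShift φ)^[j] p)‖ ^ 2 =
      (Dn Δ φ k).indicator (rhon φ ρ k) p.1 := by
  classical
  simp only [norm_prod, ← Finset.prod_pow, norm_regularWeight_sq hρ, regularShift_iterate,
    Set.indicator_apply, Finset.prod_ite_zero, Finset.mem_range, Dn, rhon, Set.mem_ofPred_eq]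

theorem IsPotential.sum_norm_regularWeight_sq_le [TopologicalSpace α] {M : ℝ}
    (hpot : IsPotential Δ φ ρ M) (j : α × ℤ) (S : Finset (α × ℤ))
    (hS : ∀ p ∈ S, regularShift φ p = j) :
    ∑ p ∈ S, ‖regularWeight Δ ρ p‖ ^ 2 ≤ M := by
  classical
  have hfib (p) (hp : p ∈ S) : ‖regularWeight Δ ρ p‖ ^ 2 = (Fiber Δ φ j.1).indicator ρ p.1 := by
    have hφp : φ p.1 = j.1 := congrArg Prod.fst (hS p hp)
    rw [norm_regularWeight_sq hpot.1]
    by_cases hpΔ : p.1 ∈ Δ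
    · rw [Set.indicator_of_mem hpΔ,
        Set.indicator_of_mem (show p.1 ∈ Fiber Δ φ j.1 from ⟨hpΔ, hφp⟩)]
    · rw [Set.indicator_of_notMem hpΔ, Set.indicator_of_notMem fun h => hpΔ h.1]
  -- the second coordinate of `p ∈ S` is `j.2 + 1`, so `S` injects into the fibre of `φ` over `j.1`
  have hinj : Set.InjOn Prod.fst (S : Set (α × ℤ)) := fun p hp q hq hpq => by
    have hp2 := congrArg Prod.snd (hS p hp)
    have hq2 := congrArg Prod.snd (hS q hq)
    simp only [regularShift] at hp2 hq2
    exact Prod.ext hpq (by omega)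
  have hnonneg (x : α) : 0 ≤ (Fiber Δ φ j.1).indicator ρ x :=
    Set.indicator_nonneg (fun x hx => hpot.1 x hx.1) x
  calc ∑ p ∈ S, ‖regularWeight Δ ρ p‖ ^ 2
      = ∑ x ∈ S.image Prod.fst, (Fiber Δ φ j.1).indicator ρ x := by
        rw [Finset.sum_image hinj]
        exact Finset.sum_congr rfl hfib
    _ ≤ ∑' x, (Fiber Δ φ j.1).indicator ρ x :=
        Summable.sum_le_tsum _ (fun x _ => hnonneg x)
          (summable_subtype_iff_indicator.mp (hpot.2.1 j.1))
    _ = ∑' x : Fiber Δ φ j.1, ρ x := (tsum_subtype _ _).symm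
    _ ≤ M := hpot.2.2.1 j.1

theorem IsPotential.existsUnique_isRegularOperator [TopologicalSpace α] {M : ℝ}
    (hpot : IsPotential Δ φ ρ M) :
    ∃! T : lp (fun _ : α × ℤ => ℂ) 2 →L[ℂ] lp (fun _ : α × ℤ => ℂ) 2,
      IsRegularOperator Δ φ ρ T := by
  simp_rw [isRegularOperator_iff]
  obtain ⟨T, hT⟩ := IsWeightedComposition.exists hpot.sum_norm_regularWeight_sq_le
  exact ⟨T, hT, fun T' hT' => hT'.unique hT⟩

variable [DecidableEq α]

theorem IsRegularOperator.inner_single_pow_mul_star_pow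
    {T : lp (fun _ : α × ℤ => ℂ) 2 →L[ℂ] lp (fun _ : α × ℤ => ℂ) 2}
    (hT : IsRegularOperator Δ φ ρ T) (hρ : ∀ x ∈ Δ, 0 ≤ ρ x) (k l : ℕ) (x : α) (n : ℤ) :
    ⟪lp.single 2 (x, n) 1, (T ^ k * star T ^ l) (lp.single 2 (x, n) 1)⟫_ℂ =
      if k = l then (((Dn Δ φ k).indicator (rhon φ ρ k) x : ℝ) : ℂ) else 0 := by
  rw [(isRegularOperator_iff.mp hT).inner_single_pow_mul_star_pow, regularShift_iterate,
    regularShift_iterate]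
  split_ifs with hshift hkl hkl
  · subst hkl
    rw [Complex.mul_conj, Complex.normSq_eq_norm_sq, norm_prod_regularWeight_sq hρ]
  · simp only [Prod.mk.injEq] at hshift
    omega
  · simp [hkl] at hshift
  · rfl

end RegularOperator

theorem regular_representation_matrix_coefficients_general
    {X : Type*} [TopologicalSpace X] [DecidableEq X]
    (Δ : Set X) (φ : X → X) (ρ : X → ℝ) (M : ℝ)
    (hpot : IsPotential Δ φ ρ M)
    (πt : C₀(X, ℂ) →⋆ₙₐ[ℂ] (lp (fun _ : X × ℤ => ℂ) 2 →L[ℂ] lp (fun _ : X × ℤ => ℂ) 2))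
    (hπt : ∀ (a : C₀(X, ℂ)) (h : lp (fun _ : X × ℤ => ℂ) 2) (p : X × ℤ),
      πt a h p = a p.1 * h p) :
    -- (i)
    (∃! T : lp (fun _ : X × ℤ => ℂ) 2 →L[ℂ] lp (fun _ : X × ℤ => ℂ) 2,
      IsRegularOperator Δ φ ρ T) ∧
    -- (ii)
    (∀ T : lp (fun _ : X × ℤ => ℂ) 2 →L[ℂ] lp (fun _ : X × ℤ => ℂ) 2,
      IsRegularOperator Δ φ ρ T →
      ∀ (k l : ℕ) (a b : C₀(X, ℂ)),
        (∀ x ∉ Dn Δ φ k, a x = 0) → (∀ x ∉ Dn Δ φ l, b x = 0) →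
        ∀ (x : X) (n : ℤ),
          (k ≠ l →
            (inner ℂ (lp.single 2 (x, n) (1 : ℂ))
              ((πt a * T ^ k * (star T) ^ l * πt b) (lp.single 2 (x, n) (1 : ℂ))) : ℂ)
              = 0) ∧
          (k = l →
            ((x ∈ Dn Δ φ k →
              (inner ℂ (lp.single 2 (x, n) (1 : ℂ))
                ((πt a * T ^ k * (star T) ^ l * πt b) (lp.single 2 (x, n) (1 : ℂ))) : ℂ)
                = a x * b x * (rhon φ ρ k x : ℂ)) ∧
             (x ∉ Dn Δ φ k →
              (inner ℂ (lp.single 2 (x, n) (1 : ℂ))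
                ((πt a * T ^ k * (star T) ^ l * πt b) (lp.single 2 (x, n) (1 : ℂ))) : ℂ)
                = 0)))) := by
  refine ⟨hpot.existsUnique_isRegularOperator, fun T hT k l a b _ _ x n => ?_⟩
  have hcoeff : ⟪lp.single 2 (x, n) 1,
      (πt a * T ^ k * star T ^ l * πt b) (lp.single 2 (x, n) 1)⟫_ℂ =
        a x * b x * if k = l then (((Dn Δ φ k).indicator (rhon φ ρ k) x : ℝ) : ℂ) else 0 := by
    rw [mul_assoc (πt a), IsWeightedComposition.inner_single_mul_mul (hπt a) (hπt b),
      hT.inner_single_pow_mul_star_pow hpot.1]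
  refine ⟨fun hkl => ?_, fun hkl => ⟨fun hx => ?_, fun hx => ?_⟩⟩
  · rw [hcoeff, if_neg hkl, mul_zero]
  · rw [hcoeff, if_pos hkl, Set.indicator_of_mem hx]
  · rw [hcoeff, if_pos hkl, Set.indicator_of_notMem hx, Complex.ofReal_zero, mul_zero]

/-- The regular representation: existence and uniqueness of `T̃`, and the
diagonal matrix coefficients of `π̃(a) T̃ᵏ (T̃*)ˡ π̃(b)`. -/
theorem regular_representation_matrix_coefficients
    {X : Type*} [TopologicalSpace X] [LocallyCompactSpace X] [T2Space X] [DecidableEq X]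
    (Δ : Set X) (φ : X → X) (ρ : X → ℝ) (M : ℝ)
    (hΔ : IsOpen Δ) (hφ : ContinuousOn φ Δ)
    (hcount : ∀ y : X, (Fiber Δ φ y).Countable)
    (hpot : IsPotential Δ φ ρ M)
    (πt : C₀(X, ℂ) →⋆ₙₐ[ℂ] (lp (fun _ : X × ℤ => ℂ) 2 →L[ℂ] lp (fun _ : X × ℤ => ℂ) 2))
    (hπt : ∀ (a : C₀(X, ℂ)) (h : lp (fun _ : X × ℤ => ℂ) 2) (p : X × ℤ),
      πt a h p = a p.1 * h p) :
    -- (i)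
    (∃! T : lp (fun _ : X × ℤ => ℂ) 2 →L[ℂ] lp (fun _ : X × ℤ => ℂ) 2,
      IsRegularOperator Δ φ ρ T) ∧
    -- (ii)
    (∀ T : lp (fun _ : X × ℤ => ℂ) 2 →L[ℂ] lp (fun _ : X × ℤ => ℂ) 2,
      IsRegularOperator Δ φ ρ T →
      ∀ (k l : ℕ) (a b : C₀(X, ℂ)),
        (∀ x ∉ Dn Δ φ k, a x = 0) → (∀ x ∉ Dn Δ φ l, b x = 0) →
        ∀ (x : X) (n : ℤ),
          (k ≠ l →
            (inner ℂ (lp.single 2 (x, n) (1 : ℂ))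
              ((πt a * T ^ k * (star T) ^ l * πt b) (lp.single 2 (x, n) (1 : ℂ))) : ℂ)
              = 0) ∧
          (k = l →
            ((x ∈ Dn Δ φ k →
              (inner ℂ (lp.single 2 (x, n) (1 : ℂ))
                ((πt a * T ^ k * (star T) ^ l * πt b) (lp.single 2 (x, n) (1 : ℂ))) : ℂ)
                = a x * b x * (rhon φ ρ k x : ℂ)) ∧
             (x ∉ Dn Δ φ k →
              (inner ℂ (lp.single 2 (x, n) (1 : ℂ))
                ((πt a * T ^ k * (star T) ^ l * πt b) (lp.single 2 (x, n) (1 : ℂ))) : ℂ)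
                = 0)))) :=
  regular_representation_matrix_coefficients_general Δ φ ρ M hpot πt hπt
end
end

section
/- Let X be a locally compact Hausdorff space, Δ ⊆ X open, and φ : Δ → X a local homeomorphism, i.e. every x ∈ Δ has an open neighbourhood U ⊆ Δ such that φ(U) is open in X and φ restricted to U is a homeomorphism onto φ(U). Let ρ : Δ → [0,∞) be continuous with M := sup_{y∈X} Σ_{x∈φ⁻¹(y)} ρ(x) < ∞. Then for every a ∈ C₀(Δ) the function L(a) : y ↦ Σ_{x∈φ⁻¹(y)} ρ(x)a(x) belongs to C₀(X), satisfies ‖L(a)‖_∞ ≤ M‖a‖_∞, L(a) ≥ 0 whenever a ≥ 0, and L((b∘φ)·a) = b·L(a) for every b ∈ C₀(X), where (b∘φ)·a denotes the element of C₀(Δ) equal to b(φ(x))a(x) on Δ and 0 elsewhere. -/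
open scoped ZeroAtInfty

noncomputable section

variable {X : Type*} [TopologicalSpace X]

/-!
If `a` is compactly supported inside an open set `U ⊆ Δ` on which `φ` is an injective open map,
then `L(a) = (ρ · a) ∘ (φ|_U)⁻¹` on the open set `φ(U)` and `L(a) = 0` off the compact set
`φ(supp a)`, so `L(a)` is continuous with compact support. A partition of unity subordinate to
such charts writes any `a ∈ C₀(Δ)`, up to `ε`, as a finite sum of such functions; since
`|L(f)(y)| ≤ M sup |f|` pointwise, `L(a)` is a uniform limit of compactly supported continuous
functions and hence lies in `C₀(X)`. Positivity and `L((b ∘ φ) a) = b L(a)` hold termwise in each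
fibre sum.
-/

open Set Filter Topology

section General

variable {E : Type*} [NormedAddCommGroup E]

theorem ZeroAtInftyContinuousMap.norm_apply_le_s15 (f : C₀(X, E)) (x : X) : ‖f x‖ ≤ ‖f‖ :=
  (f.toBCF.norm_coe_le_norm x).trans_eq ZeroAtInftyContinuousMap.norm_toBCF_eq_norm

theorem exists_zeroAtInfty_eq_of_uniform_approx {g : X → E}
    (h : ∀ ε > 0, ∃ f : X → E, Continuous f ∧ HasCompactSupport f ∧ ∀ y, ‖g y - f y‖ ≤ ε) :
    ∃ b : C₀(X, E), ⇑b = g := by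
  have hcont : Continuous g := by
    refine continuous_of_uniform_approx_of_continuous fun u hu => ?_
    obtain ⟨ε, hε, hεu⟩ := Metric.mem_uniformity_dist.mp hu
    obtain ⟨f, hf, -, hgf⟩ := h (ε / 2) (half_pos hε)
    exact ⟨f, hf, fun y => hεu <| by rw [dist_eq_norm]; linarith [hgf y]⟩
  have hzero : Tendsto g (cocompact X) (𝓝 0) := by
    refine Metric.tendsto_nhds.mpr fun ε hε => ?_
    obtain ⟨f, -, hfc, hgf⟩ := h (ε / 2) (half_pos hε)
    filter_upwards [hfc.compl_mem_cocompact] with y hy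
    rw [dist_zero_right, ← sub_zero (g y), ← image_eq_zero_of_notMem_tsupport hy]
    linarith [hgf y]
  exact ⟨⟨⟨g, hcont⟩, hzero⟩, rfl⟩

theorem ZeroAtInftyContinuousMap.exists_sum_smul_approx [LocallyCompactSpace X] [T2Space X]
    [NormedSpace ℝ E] (a : C₀(X, E)) {ε : ℝ} (hε : 0 < ε) (U : X → Set X)
    (hU : ∀ x, a x ≠ 0 → IsOpen (U x) ∧ x ∈ U x) :
    ∃ (t : Finset X) (h : X → C(X, ℝ)),
      (∀ i ∈ t, a i ≠ 0 ∧ HasCompactSupport (h i) ∧ tsupport (h i) ⊆ U i) ∧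
      ∀ x, ‖a x - ∑ i ∈ t, h i x • a x‖ ≤ ε := by
  set K := {x | ε ≤ ‖a x‖}
  have hK : IsCompact K := by
    obtain ⟨C, hC, hCK⟩ := mem_cocompact.mp
      ((Metric.tendsto_nhds.mp a.zero_at_infty' ε hε).mono fun x hx => by
        simpa only [dist_zero_right] using hx)
    refine hC.of_isClosed_subset (isClosed_le continuous_const a.continuous.norm) fun x hx => ?_
    by_contra hxC
    exact (not_le.mpr (hCK hxC)) (show ε ≤ ‖a x‖ from hx)
  have hKa : ∀ x ∈ K, a x ≠ 0 := fun x hx hax => by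
    simp only [K, mem_ofPred_eq, hax, norm_zero] at hx; linarith
  obtain ⟨t, htK, hKt⟩ := hK.elim_nhds_subcover U fun x hx =>
    (hU x (hKa x hx)).1.mem_nhds (hU x (hKa x hx)).2
  obtain ⟨p, hpU, hpc⟩ := PartitionOfUnity.exists_isSubordinate_of_locallyFinite_t2space hK
    (fun i : t => U i) (fun i => (hU i (hKa i (htK i i.2))).1) (locallyFinite_of_finite _)
    (by simpa only [iUnion_subtype] using hKt)
  classical
  refine ⟨t, fun i => if hi : i ∈ t then p ⟨i, hi⟩ else 0,
    fun i hi => by simpa only [dif_pos hi] using ⟨hKa i (htK i hi), hpc ⟨i, hi⟩, hpU ⟨i, hi⟩⟩,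
    fun x => ?_⟩
  have hsum : ∑ i ∈ t, (if hi : i ∈ t then p ⟨i, hi⟩ else 0 : C(X, ℝ)) x = ∑ᶠ i, p i x := by
    rw [finsum_eq_sum_of_fintype, ← Finset.sum_coe_sort t]
    simp only [Finset.coe_mem, dif_pos]
  rw [← Finset.sum_smul, hsum, ← one_smul ℝ (a x), smul_smul, mul_one, ← sub_smul, norm_smul,
    Real.norm_eq_abs, abs_of_nonneg (sub_nonneg.mpr (p.sum_le_one x))]
  by_cases hx : x ∈ K
  · simp [p.sum_eq_one hx, hε.le]
  · calc (1 - ∑ᶠ i, p i x) * ‖a x‖ ≤ 1 * ε := by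
          gcongr
          · linarith [p.sum_nonneg x]
          · exact (not_le.mp hx).le
      _ = ε := one_mul ε

theorem continuousOn_invFunOn_image {Y : Type*} [TopologicalSpace Y] [Nonempty X]
    {f : X → Y} {U : Set X} (hinj : InjOn f U) (hopen : ∀ V ⊆ U, IsOpen V → IsOpen (f '' V))
    (hU : IsOpen U) : ContinuousOn (Function.invFunOn f U) (f '' U) := by
  refine (continuousOn_open_iff (hopen U subset_rfl hU)).mpr fun V hV => ?_
  convert hopen (U ∩ V) inter_subset_left (hU.inter hV) using 1
  ext y
  constructor
  · rintro ⟨⟨x, hx, rfl⟩, hxV⟩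
    rw [mem_preimage, hinj.leftInvOn_invFunOn hx] at hxV
    exact ⟨x, ⟨hx, hxV⟩, rfl⟩
  · rintro ⟨x, ⟨hx, hxV⟩, rfl⟩
    exact ⟨mem_image_of_mem f hx, by rwa [mem_preimage, hinj.leftInvOn_invFunOn hx]⟩

theorem continuous_of_continuousOn_of_norm_le {F : Type*} [NormedAddCommGroup F] {Δ : Set X}
    {g : X → E} {a : X → F} {C : ℝ} (hΔ : IsOpen Δ) (hg : ContinuousOn g Δ) (ha : Continuous a)
    (ha0 : ∀ x ∉ Δ, a x = 0) (hle : ∀ x, ‖g x‖ ≤ C * ‖a x‖) : Continuous g := by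
  refine continuous_iff_continuousAt.mpr fun x => ?_
  by_cases hx : x ∈ Δ
  · exact hg.continuousAt (hΔ.mem_nhds hx)
  · have hgx : g x = 0 := norm_le_zero_iff.mp (by simpa [ha0 x hx] using hle x)
    rw [ContinuousAt, hgx]
    refine squeeze_zero_norm hle ?_
    simpa [ha0 x hx] using (ha.norm.tendsto x).const_mul C

end General

section Transfer

variable {Δ : Set X} {φ : X → X} {ρ : X → ℝ}

def transferOp (Δ : Set X) (φ : X → X) (ρ : X → ℝ) (u : X → ℂ) (y : X) : ℂ :=
  ∑' x : Fiber Δ φ y, (ρ x.1 : ℂ) * u x.1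

def IsInjOpenChart (Δ : Set X) (φ : X → X) (U : Set X) : Prop :=
  IsOpen U ∧ U ⊆ Δ ∧ InjOn φ U ∧ ∀ V ⊆ U, IsOpen V → IsOpen (φ '' V)

omit [TopologicalSpace X] in
theorem summable_transferOp_of_norm_le (hρ0 : ∀ x ∈ Δ, 0 ≤ ρ x) {y : X}
    (hsum : Summable fun x : Fiber Δ φ y => ρ x.1) {u : X → ℂ} {C : ℝ}
    (hu : ∀ x ∈ Δ, ‖u x‖ ≤ C) :
    Summable fun x : Fiber Δ φ y => (ρ x.1 : ℂ) * u x.1 := by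
  refine Summable.of_norm_bounded (hsum.mul_right C) fun x => ?_
  rw [norm_mul, Complex.norm_real, Real.norm_of_nonneg (hρ0 x.1 x.2.1)]
  exact mul_le_mul_of_nonneg_left (hu x.1 x.2.1) (hρ0 x.1 x.2.1)

omit [TopologicalSpace X] in
theorem norm_transferOp_le (hρ0 : ∀ x ∈ Δ, 0 ≤ ρ x) {y : X}
    (hsum : Summable fun x : Fiber Δ φ y => ρ x.1) {M : ℝ} (hM : ∑' x : Fiber Δ φ y, ρ x.1 ≤ M)
    {u : X → ℂ} {C : ℝ} (hC : 0 ≤ C) (hu : ∀ x ∈ Δ, ‖u x‖ ≤ C) :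
    ‖transferOp Δ φ ρ u y‖ ≤ M * C := by
  refine (tsum_of_norm_bounded (hsum.hasSum.mul_right C) fun x => ?_).trans
    (mul_le_mul_of_nonneg_right hM hC)
  rw [norm_mul, Complex.norm_real, Real.norm_of_nonneg (hρ0 x.1 x.2.1)]
  exact mul_le_mul_of_nonneg_left (hu x.1 x.2.1) (hρ0 x.1 x.2.1)

omit [TopologicalSpace X] in
theorem transferOp_sub_finset_sum {ι : Type*} (hρ0 : ∀ x ∈ Δ, 0 ≤ ρ x) {y : X}
    (hsum : Summable fun x : Fiber Δ φ y => ρ x.1) {a : X → ℂ} {u : ι → X → ℂ} {t : Finset ι}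
    (ha : ∃ C, ∀ x ∈ Δ, ‖a x‖ ≤ C) (hu : ∀ i ∈ t, ∃ C, ∀ x ∈ Δ, ‖u i x‖ ≤ C) :
    transferOp Δ φ ρ (fun x => a x - ∑ i ∈ t, u i x) y =
      transferOp Δ φ ρ a y - ∑ i ∈ t, transferOp Δ φ ρ (u i) y := by
  have hsummable {v : X → ℂ} (hv : ∃ C, ∀ x ∈ Δ, ‖v x‖ ≤ C) :=
    summable_transferOp_of_norm_le hρ0 hsum hv.choose_spec
  simp only [transferOp, mul_sub, Finset.mul_sum]
  rw [(hsummable ha).tsum_sub (summable_sum fun i hi => hsummable (hu i hi)),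
    Summable.tsum_finsetSum fun i hi => hsummable (hu i hi)]

omit [TopologicalSpace X] in
theorem transferOp_eq_zero_of_notMem_image {u : X → ℂ} {y : X}
    (hy : y ∉ φ '' Function.support u) : transferOp Δ φ ρ u y = 0 := by
  refine (tsum_congr fun x => ?_).trans tsum_zero
  rw [show u x.1 = 0 from by_contra fun hux => hy ⟨x.1, hux, x.2.2⟩, mul_zero]

omit [TopologicalSpace X] in
theorem transferOp_apply_of_support_subset {U : Set X} (hUΔ : U ⊆ Δ) (hinj : InjOn φ U)
    {u : X → ℂ} (hu : Function.support u ⊆ U) {z : X} (hz : z ∈ U) :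
    transferOp Δ φ ρ u (φ z) = ρ z * u z := by
  refine tsum_eq_single (⟨z, hUΔ hz, rfl⟩ : Fiber Δ φ (φ z)) fun x hxz => ?_
  by_contra hx
  have hxU : x.1 ∈ U := hu (right_ne_zero_of_mul hx)
  exact hxz (Subtype.ext (hinj hxU hz x.2.2))

theorem continuous_transferOp_of_chart [T2Space X] (hφ : ContinuousOn φ Δ) (hρ : ContinuousOn ρ Δ)
    {U : Set X} (hU : IsInjOpenChart Δ φ U) {u : X → ℂ} (hu : Continuous u)
    (huc : HasCompactSupport u) (huU : tsupport u ⊆ U) :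
    Continuous (transferOp Δ φ ρ u) := by
  obtain ⟨hUo, hUΔ, hinj, hopen⟩ := hU
  refine continuous_iff_continuousAt.mpr fun y => ?_
  have : Nonempty X := ⟨y⟩
  by_cases hy : y ∈ φ '' U
  · set ψ := Function.invFunOn φ U
    have hψU : MapsTo ψ (φ '' U) U := (surjOn_image φ U).mapsTo_invFunOn
    have hφψ : ∀ y' ∈ φ '' U, φ (ψ y') = y' := fun y' hy' =>
      (surjOn_image φ U).rightInvOn_invFunOn hy'
    have hLψ : EqOn (transferOp Δ φ ρ u) (fun y => ρ (ψ y) * u (ψ y)) (φ '' U) := by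
      intro y' hy'
      have h := transferOp_apply_of_support_subset (ρ := ρ) hUΔ hinj
        ((subset_tsupport u).trans huU) (hψU hy')
      rwa [hφψ y' hy'] at h
    have hψ := continuousOn_invFunOn_image hinj hopen hUo
    have hcont : ContinuousOn (fun y => (ρ (ψ y) : ℂ) * u (ψ y)) (φ '' U) :=
      (Complex.continuous_ofReal.comp_continuousOn (hρ.comp hψ (hψU.mono_right hUΔ))).mul
        (hu.comp_continuousOn hψ)
    have hUy : φ '' U ∈ 𝓝 y := (hopen U subset_rfl hUo).mem_nhds hy
    exact (hcont.continuousAt hUy).congr (eventuallyEq_of_mem hUy hLψ.symm)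
  · have hK : IsClosed (φ '' tsupport u) :=
      (huc.image_of_continuousOn (hφ.mono (huU.trans hUΔ))).isClosed
    have hy' : y ∉ φ '' tsupport u := fun h => hy (image_mono huU h)
    refine (continuousAt_const (y := (0 : ℂ))).congr
      (eventuallyEq_of_mem (hK.isOpen_compl.mem_nhds hy') fun y'' hy'' => ?_)
    exact (transferOp_eq_zero_of_notMem_image fun h => hy'' (image_mono (subset_tsupport u) h)).symm

theorem hasCompactSupport_transferOp [R1Space X] (hφ : ContinuousOn φ Δ) {u : X → ℂ}
    (huc : HasCompactSupport u) (huΔ : tsupport u ⊆ Δ) :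
    HasCompactSupport (transferOp Δ φ ρ u) :=
  HasCompactSupport.intro (huc.image_of_continuousOn (hφ.mono huΔ)) fun _ hy =>
    transferOp_eq_zero_of_notMem_image fun h => hy (image_mono (subset_tsupport u) h)

end Transfer

section Operator

variable {Δ : Set X} {φ : X → X} {ρ : X → ℝ} {M : ℝ}

theorem exists_zeroAtInfty_eq_transferOp [LocallyCompactSpace X] [T2Space X]
    (hφ : ContinuousOn φ Δ) (hcharts : ∀ x ∈ Δ, ∃ U, IsInjOpenChart Δ φ U ∧ x ∈ U)
    (hρ : ContinuousOn ρ Δ) (hρ0 : ∀ x ∈ Δ, 0 ≤ ρ x)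
    (hsum : ∀ y, Summable fun x : Fiber Δ φ y => ρ x.1)
    (hM : ∀ y, ∑' x : Fiber Δ φ y, ρ x.1 ≤ M) (a : C₀(X, ℂ)) (ha : ∀ x ∉ Δ, a x = 0) :
    ∃ b : C₀(X, ℂ), ⇑b = transferOp Δ φ ρ a := by
  choose! U hU hxU using hcharts
  have hΔa : ∀ x, a x ≠ 0 → x ∈ Δ := fun x hax => by_contra fun hx => hax (ha x hx)
  refine exists_zeroAtInfty_eq_of_uniform_approx fun ε hε => ?_
  have hδ : 0 < ε / (|M| + 1) := by positivity
  obtain ⟨t, h, hht, hah⟩ := a.exists_sum_smul_approx hδ U fun x hx =>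
    ⟨(hU x (hΔa x hx)).1, hxU x (hΔa x hx)⟩
  set u : X → X → ℂ := fun i x => h i x • a x
  have hu (i) (hi : i ∈ t) :
      Continuous (u i) ∧ HasCompactSupport (u i) ∧ tsupport (u i) ⊆ U i :=
    ⟨(h i).continuous.smul a.continuous, (hht i hi).2.1.smul_right,
      (tsupport_smul_subset_left _ _).trans (hht i hi).2.2⟩
  have hchart (i) (hi : i ∈ t) : IsInjOpenChart Δ φ (U i) := hU i (hΔa i (hht i hi).1)
  obtain ⟨hcont, hcpt⟩ : Continuous (∑ i ∈ t, transferOp Δ φ ρ (u i)) ∧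
      HasCompactSupport (∑ i ∈ t, transferOp Δ φ ρ (u i)) :=
    Finset.sum_induction _ (fun f => Continuous f ∧ HasCompactSupport f)
      (fun _ _ hf hg => ⟨hf.1.add hg.1, hf.2.add hg.2⟩) ⟨continuous_const, .zero⟩
      fun i hi => ⟨continuous_transferOp_of_chart hφ hρ (hchart i hi) (hu i hi).1 (hu i hi).2.1
        (hu i hi).2.2, hasCompactSupport_transferOp hφ (hu i hi).2.1
          ((hu i hi).2.2.trans (hchart i hi).2.1)⟩
  refine ⟨∑ i ∈ t, transferOp Δ φ ρ (u i), hcont, hcpt, fun y => ?_⟩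
  have hbdd (i) (hi : i ∈ t) : ∃ C, ∀ x ∈ Δ, ‖u i x‖ ≤ C :=
    ((hu i hi).1.bounded_above_of_compact_support (hu i hi).2.1).imp fun _ hC x _ => hC x
  rw [Finset.sum_apply, ← transferOp_sub_finset_sum hρ0 (hsum y)
    ⟨‖a‖, fun x _ => a.norm_apply_le_s15 x⟩ hbdd]
  calc _ ≤ M * (ε / (|M| + 1)) := norm_transferOp_le hρ0 (hsum y) (hM y) hδ.le fun x _ => hah x
    _ ≤ (|M| + 1) * (ε / (|M| + 1)) := by gcongr; linarith [le_abs_self M]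
    _ = ε := mul_div_cancel₀ ε (by positivity)

theorem norm_le_of_eq_transferOp (hρ0 : ∀ x ∈ Δ, 0 ≤ ρ x)
    (hsum : ∀ y, Summable fun x : Fiber Δ φ y => ρ x.1)
    (hM : ∀ y, ∑' x : Fiber Δ φ y, ρ x.1 ≤ M) {a b : C₀(X, ℂ)}
    (hb : ⇑b = transferOp Δ φ ρ a) : ‖b‖ ≤ M * ‖a‖ := by
  rcases isEmpty_or_nonempty X with hX | ⟨⟨y₀⟩⟩
  · have hzero (f : C₀(X, ℂ)) : ‖f‖ = 0 := by
      rw [← ZeroAtInftyContinuousMap.norm_toBCF_eq_norm]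
      exact le_antisymm ((BoundedContinuousFunction.norm_le le_rfl).mpr isEmptyElim)
        (norm_nonneg _)
    simp [hzero]
  have hM0 : 0 ≤ M := (tsum_nonneg fun x : Fiber Δ φ y₀ => hρ0 x.1 x.2.1).trans (hM y₀)
  rw [← ZeroAtInftyContinuousMap.norm_toBCF_eq_norm]
  refine (BoundedContinuousFunction.norm_le (by positivity)).mpr fun y => ?_
  change ‖b y‖ ≤ _
  rw [hb]
  exact norm_transferOp_le hρ0 (hsum y) (hM y) (norm_nonneg a) fun x _ => a.norm_apply_le_s15 x

omit [TopologicalSpace X] in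
open scoped ComplexOrder in
theorem transferOp_nonneg (hρ0 : ∀ x ∈ Δ, 0 ≤ ρ x) {u : X → ℂ} (hu : ∀ x ∈ Δ, 0 ≤ u x)
    (y : X) : 0 ≤ transferOp Δ φ ρ u y :=
  tsum_nonneg fun x => mul_nonneg (Complex.zero_le_real.mpr (hρ0 x.1 x.2.1)) (hu x.1 x.2.1)

omit [TopologicalSpace X] in
theorem transferOp_comp_mul {c u d : X → ℂ} (hd : ∀ x ∈ Δ, d x = c (φ x) * u x) (y : X) :
    transferOp Δ φ ρ d y = c y * transferOp Δ φ ρ u y := by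
  rw [transferOp, transferOp, ← tsum_mul_left]
  refine tsum_congr fun x => ?_
  rw [hd x.1 x.2.1, x.2.2]
  ring

theorem exists_zeroAtInfty_comp_mul (hΔ : IsOpen Δ) (hφ : ContinuousOn φ Δ) (c a : C₀(X, ℂ))
    (ha : ∀ x ∉ Δ, a x = 0) :
    ∃ d : C₀(X, ℂ), (∀ x ∈ Δ, d x = c (φ x) * a x) ∧ ∀ x ∉ Δ, d x = 0 := by
  classical
  set d : X → ℂ := Δ.indicator fun x => c (φ x) * a x
  have hle (x : X) : ‖d x‖ ≤ ‖c‖ * ‖a x‖ :=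
    (norm_indicator_le_norm_self _ x).trans <| by
      rw [norm_mul]; gcongr; exact c.norm_apply_le_s15 _
  have hcont : Continuous d := continuous_of_continuousOn_of_norm_le hΔ
    ((c.continuous.comp_continuousOn hφ).mul a.continuous.continuousOn |>.congr
      fun x hx => indicator_of_mem hx _) a.continuous ha hle
  have hzero : Tendsto d (cocompact X) (𝓝 0) :=
    squeeze_zero_norm hle (by simpa using a.zero_at_infty'.norm.const_mul ‖c‖)
  exact ⟨⟨⟨d, hcont⟩, hzero⟩, fun x hx => (indicator_of_mem hx _ : d x = _),
    fun x hx => (indicator_of_notMem hx _ : d x = 0)⟩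

end Operator

/-- If `φ : Δ → X` is a local homeomorphism and `ρ : Δ → [0,∞)` is continuous
with `sup_y Σ_{x ∈ φ⁻¹(y)} ρ(x) ≤ M < ∞`, then `L(a)(y) = Σ_{x ∈ φ⁻¹(y)} ρ(x)a(x)` defines a
bounded positive transfer operator `L : C₀(Δ) → C₀(X)` for `φ`. -/
theorem localHomeo_transfer_operator
    {X : Type*} [TopologicalSpace X] [LocallyCompactSpace X] [T2Space X]
    (Δ : Set X) (φ : X → X) (ρ : X → ℝ) (M : ℝ)
    (hΔ : IsOpen Δ) (hφ : ContinuousOn φ Δ)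
    (hloc : ∀ x ∈ Δ, ∃ U : Set X, IsOpen U ∧ x ∈ U ∧ U ⊆ Δ ∧ Set.InjOn φ U ∧
      ∀ V ⊆ U, IsOpen V → IsOpen (φ '' V))
    (hρcont : ContinuousOn ρ Δ) (hρ0 : ∀ x ∈ Δ, 0 ≤ ρ x)
    (hsum : ∀ y : X, Summable fun x : Fiber Δ φ y => ρ x.1)
    (hM : ∀ y : X, (∑' x : Fiber Δ φ y, ρ x.1) ≤ M) :
    ∀ a : C₀(X, ℂ), (∀ x ∉ Δ, a x = 0) →
      (∀ y : X, Summable fun x : Fiber Δ φ y => (ρ x.1 : ℂ) * a x.1) ∧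
      ∃ b : C₀(X, ℂ),
        (∀ y : X, b y = ∑' x : Fiber Δ φ y, (ρ x.1 : ℂ) * a x.1) ∧
        ‖b‖ ≤ M * ‖a‖ ∧
        ((∀ x : X, (a x).im = 0 ∧ 0 ≤ (a x).re) →
          ∀ y : X, (b y).im = 0 ∧ 0 ≤ (b y).re) ∧
        ∀ c : C₀(X, ℂ), ∃ d : C₀(X, ℂ),
          (∀ x ∈ Δ, d x = c (φ x) * a x) ∧ (∀ x ∉ Δ, d x = 0) ∧
          ∀ y : X, (∑' x : Fiber Δ φ y, (ρ x.1 : ℂ) * d x.1) = c y * b y := by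
  intro a ha
  have hcharts (x) (hx : x ∈ Δ) : ∃ U, IsInjOpenChart Δ φ U ∧ x ∈ U :=
    let ⟨U, hUo, hxU, hUΔ, hinj, hopen⟩ := hloc x hx
    ⟨U, ⟨hUo, hUΔ, hinj, hopen⟩, hxU⟩
  obtain ⟨b, hb⟩ := exists_zeroAtInfty_eq_transferOp hφ hcharts hρcont hρ0 hsum hM a ha
  refine ⟨fun y => summable_transferOp_of_norm_le hρ0 (hsum y) fun x _ => a.norm_apply_le_s15 x,
    b, congrFun hb, norm_le_of_eq_transferOp hρ0 hsum hM hb, fun hpos y => ?_, fun c => ?_⟩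
  · have h := Complex.nonneg_iff.mp <| hb ▸ transferOp_nonneg hρ0
      (fun x _ => Complex.nonneg_iff.mpr ⟨(hpos x).2, (hpos x).1.symm⟩) y
    exact ⟨h.2.symm, h.1⟩
  · obtain ⟨d, hdΔ, hd0⟩ := exists_zeroAtInfty_comp_mul hΔ hφ c a ha
    exact ⟨d, hdΔ, hd0, fun y => (transferOp_comp_mul hdΔ y).trans (by rw [hb])⟩
end
end
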